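/- arXiv:1310.7208 — 7 statements merged into one kernel-verified Lean document; each statement's English description precedes it below -/
import Mathlib

section
/- For arbitrary monotone ordered paths (P_{r_1}, mon), ..., (P_{r_c}, mon), the ordered Ramsey number satisfies OR((P_{r_1},mon),...,(P_{r_c},mon)) = 1 + ∏_{i=1}^{c} (r_i − 1). -/
/-!
Upper bound (an Erdős–Szekeres argument): label each vertex `v` by the vector whose `i`-th entry
is the number of edges of a longest monotone color-`i` path ending at `v`. If an edge `u < v` has
color `i`, every such path ending at `u` extends to `v`, so the labels of `u` and `v` differ in
entry `i`. Without a color-`i` copy of the path on `r i` vertices the `i`-th entry lies below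
`r i - 1`, so there are at most `∏ i, (r i - 1)` vertices.

Lower bound: embed `Fin M` into the lexicographically ordered product `∏ i, Fin (r i - 1)` and
color `u < v` by a coordinate in which `v` exceeds `u`. Along a monotone color-`i` path the
`i`-th coordinate then increases strictly, so the path has at most `r i - 1` vertices.
-/

/-- The ordered complete graph on `Fin N`, edge-colored by `f` (on ordered pairs),
contains a copy of the ordered graph `G` in color `i`: an order-preserving
embedding mapping edges to edges of color `i`. -/
def hasOrdCopy {r N c : ℕ} (G : SimpleGraph (Fin r)) (f : Fin N → Fin N → Fin c) (i : Fin c) :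
    Prop :=
  ∃ g : Fin r → Fin N, StrictMono g ∧ ∀ a b : Fin r, a < b → G.Adj a b → f (g a) (g b) = i

/-- `N` satisfies the ordered Ramsey property for the ordered graphs `G i`:
every `c`-coloring of the ordered complete graph on `N` vertices contains a
copy of `G i` in color `i` for some `i`. -/
def ordRamseyProp {c : ℕ} (r : Fin c → ℕ) (G : ∀ i, SimpleGraph (Fin (r i))) (N : ℕ) : Prop :=
  ∀ f : Fin N → Fin N → Fin c, ∃ i : Fin c, hasOrdCopy (G i) f i

open SimpleGraph

variable {N c : ℕ}

def IsMonotonePath (f : Fin N → Fin N → Fin c) (i : Fin c) {k : ℕ} (g : Fin (k + 1) → Fin N) :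
    Prop :=
  ∀ j : Fin k, g j.castSucc < g j.succ ∧ f (g j.castSucc) (g j.succ) = i

namespace IsMonotonePath

variable {f : Fin N → Fin N → Fin c} {i : Fin c} {k : ℕ} {g : Fin (k + 1) → Fin N}

theorem strictMono (hg : IsMonotonePath f i g) : StrictMono g :=
  Fin.strictMono_iff_lt_succ.mpr fun j => (hg j).1

theorem succ_le (hg : IsMonotonePath f i g) : k + 1 ≤ N :=
  Fin.le_of_injective g hg.strictMono.injective

theorem snoc (hg : IsMonotonePath f i g) {v : Fin N} (hlt : g (Fin.last k) < v)
    (hf : f (g (Fin.last k)) v = i) :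
    IsMonotonePath f i (Fin.snoc (α := fun _ => Fin N) g v) := by
  intro j
  cases j using Fin.lastCases with
  | last =>
    simp only [Fin.succ_last, Fin.snoc_last, Fin.snoc_castSucc]
    exact ⟨hlt, hf⟩
  | cast j =>
    simp only [Fin.succ_castSucc, Fin.snoc_castSucc]
    exact hg j

theorem comp_castLE (hg : IsMonotonePath f i g) {m : ℕ} (hm : m ≤ k) :
    IsMonotonePath f i (g ∘ Fin.castLE (Nat.succ_le_succ hm)) := fun j => by
  simpa [Fin.castLE_castSucc] using hg (Fin.castLE hm j)

end IsMonotonePath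

theorem hasOrdCopy_pathGraph_succ_iff {f : Fin N → Fin N → Fin c} {i : Fin c} {k : ℕ} :
    hasOrdCopy (pathGraph (k + 1)) f i ↔ ∃ g : Fin (k + 1) → Fin N, IsMonotonePath f i g := by
  constructor
  · rintro ⟨g, hg, hcol⟩
    refine ⟨g, fun j => ⟨hg Fin.castSucc_lt_succ, hcol _ _ Fin.castSucc_lt_succ ?_⟩⟩
    simp [pathGraph_adj]
  · rintro ⟨g, hg⟩
    refine ⟨g, hg.strictMono, fun a b hab hadj => ?_⟩
    have hsucc : a.val + 1 = b.val := by
      rw [pathGraph_adj] at hadj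
      have : a.val < b.val := hab
      omega
    have ha : (⟨a.val, by omega⟩ : Fin k).castSucc = a := rfl
    have hb : (⟨a.val, by omega⟩ : Fin k).succ = b := Fin.ext hsucc
    simpa [ha, hb] using (hg ⟨a.val, by omega⟩).2

/-- There is a monotone color-`i` path with `k` edges ending at `v`. -/
def HasMonotonePathTo (f : Fin N → Fin N → Fin c) (i : Fin c) (v : Fin N) (k : ℕ) : Prop :=
  ∃ g : Fin (k + 1) → Fin N, IsMonotonePath f i g ∧ g (Fin.last k) = v

open Classical in
noncomputable def longestPathTo (f : Fin N → Fin N → Fin c) (i : Fin c) (v : Fin N) : ℕ :=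
  Nat.findGreatest (HasMonotonePathTo f i v) N

section longestPathTo

variable {f : Fin N → Fin N → Fin c} {i : Fin c}

theorem hasMonotonePathTo_longestPathTo (v : Fin N) :
    HasMonotonePathTo f i v (longestPathTo f i v) := by
  classical
  exact Nat.findGreatest_spec (Nat.zero_le N) ⟨fun _ => v, fun j => j.elim0, rfl⟩

theorem le_longestPathTo {v : Fin N} {k : ℕ} (hk : HasMonotonePathTo f i v k) :
    k ≤ longestPathTo f i v := by
  classical
  exact Nat.le_findGreatest (by have := hk.choose_spec.1.succ_le; omega) hk

theorem longestPathTo_lt {u v : Fin N} (huv : u < v) (hf : f u v = i) :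
    longestPathTo f i u < longestPathTo f i v := by
  obtain ⟨g, hg, hlast⟩ := hasMonotonePathTo_longestPathTo (f := f) (i := i) u
  rw [← hlast] at huv hf
  exact le_longestPathTo ⟨_, hg.snoc huv hf, Fin.snoc_last _ _⟩

theorem longestPathTo_succ_lt {r : ℕ} (h : ¬ hasOrdCopy (pathGraph r) f i) (v : Fin N) :
    longestPathTo f i v + 1 < r := by
  by_contra! hr
  obtain ⟨g, hg, -⟩ := hasMonotonePathTo_longestPathTo (f := f) (i := i) v
  cases r with
  | zero => exact h ⟨Fin.elim0, fun a => a.elim0, fun a => a.elim0⟩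
  | succ m =>
    exact h (hasOrdCopy_pathGraph_succ_iff.mpr ⟨_, hg.comp_castLE (by omega : m ≤ _)⟩)

end longestPathTo

theorem card_le_prod_of_forall_not_hasOrdCopy (r : Fin c → ℕ) (f : Fin N → Fin N → Fin c)
    (h : ∀ i, ¬ hasOrdCopy (pathGraph (r i)) f i) : N ≤ ∏ i, (r i - 1) := by
  let label : Fin N → ∀ i, Fin (r i - 1) := fun v i =>
    ⟨longestPathTo f i v, by have := longestPathTo_succ_lt (h i) v; omega⟩
  have hlabel : label.Injective := .of_lt_imp_ne fun u v huv heq =>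
    (longestPathTo_lt huv rfl).ne (congrArg Fin.val (congrFun heq (f u v)))
  simpa using Fintype.card_le_of_injective label hlabel

theorem exists_coloring_forall_not_hasOrdCopy {M : ℕ} (hc : 0 < c) (r : Fin c → ℕ)
    (hr : ∀ i, 0 < r i) (hM : M ≤ ∏ i, (r i - 1)) :
    ∃ f : Fin M → Fin M → Fin c, ∀ i, ¬ hasOrdCopy (pathGraph (r i)) f i := by
  let E : Fin M ↪o Lex (∀ i, Fin (r i - 1)) :=
    (Fin.castLEOrderEmb hM).trans
      (Fintype.orderIsoFinOfCardEq _ (by simp [Fintype.card_congr toLex.symm])).toOrderEmbedding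
  have hcoord : ∀ u v : Fin M, ∃ i : Fin c, u < v → ofLex (E u) i < ofLex (E v) i := by
    intro u v
    by_cases huv : u < v
    · obtain ⟨i, -, hi⟩ := E.strictMono huv
      exact ⟨i, fun _ => hi⟩
    · exact ⟨⟨0, hc⟩, fun h => absurd h huv⟩
  choose f hf using hcoord
  refine ⟨f, fun i hcopy => ?_⟩
  obtain ⟨k, hk⟩ := Nat.exists_eq_add_one_of_ne_zero (hr i).ne'
  rw [hk, hasOrdCopy_pathGraph_succ_iff] at hcopy
  obtain ⟨g, hg⟩ := hcopy
  have hmono : StrictMono fun j => ofLex (E (g j)) i := Fin.strictMono_iff_lt_succ.mpr fun j => by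
    have := hf _ _ (hg j).1
    rwa [(hg j).2] at this
  have := Fin.le_of_injective _ hmono.injective
  omega

/-- `OR((P_{r_1},mon),…,(P_{r_c},mon)) = 1 + ∏ (r_i − 1)`. -/
theorem ordered_ramsey_monotone_paths (c : ℕ) (hc : 0 < c) (r : Fin c → ℕ)
    (hr : ∀ i, 0 < r i) :
    IsLeast {N | ordRamseyProp r (fun i => SimpleGraph.pathGraph (r i)) N}
      (1 + ∏ i, (r i - 1)) := by
  refine ⟨fun f => ?_, fun M hM => ?_⟩
  · by_contra! h
    have := card_le_prod_of_forall_not_hasOrdCopy r f h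
    omega
  · by_contra! hlt
    obtain ⟨f, hf⟩ := exists_coloring_forall_not_hasOrdCopy hc r hr (by omega : M ≤ _)
    obtain ⟨i, hi⟩ := hM f
    exact hf i hi
end

section
/- For integers r_1, r_2 ≥ 2, the ordered Ramsey number of two opposite stars satisfies OR(S_{1,r_1}, S_{r_2,1}) = floor((−1 + sqrt(1 + 8(r_1−2)(r_2−2)))/2) + r_1 + r_2 − 2. -/
/-- A copy of the ordered graph `G` in color `col` in the `Bool`-colored ordered
complete graph on `Fin N`. -/
def hasOrdCopyB {r N : ℕ} (G : SimpleGraph (Fin r)) (f : Fin N → Fin N → Bool) (col : Bool) :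
    Prop :=
  ∃ g : Fin r → Fin N, StrictMono g ∧ ∀ a b : Fin r, a < b → G.Adj a b → f (g a) (g b) = col

/-- `N` satisfies the two-color ordered Ramsey property for `(G, H)`: every
red/blue coloring of the ordered complete graph on `N` vertices contains a red
(`true`) ordered copy of `G` or a blue (`false`) ordered copy of `H`. -/
def ordRamsey2Prop {r s : ℕ} (G : SimpleGraph (Fin r)) (H : SimpleGraph (Fin s)) (N : ℕ) :
    Prop :=
  ∀ f : Fin N → Fin N → Bool, hasOrdCopyB G f true ∨ hasOrdCopyB H f false
/-- The ordered star `S_{a,b}`: `a + b - 1` vertices, the center is the `a`-th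
vertex (so it has `a - 1` left leaves and `b - 1` right leaves), joined to all
other vertices. -/
def ordStar (a b : ℕ) : SimpleGraph (Fin (a + b - 1)) :=
  SimpleGraph.fromRel (fun u _ => u.val = a - 1)

/-!
Write `p = r₁ - 2` and `q = r₂ - 2`. A coloring contains no red `S_{1,p+2}` and no blue
`S_{q+2,1}` exactly when every vertex has at most `p` red edges to the right and at most `q`
blue edges to the left. On `M` vertices, vertex `v` then has at least `v - q` red edges to the
left and at most `min p (M - 1 - v)` to the right. Summed over `v`, both bounds count the red
edges, and for `M = s + p + q + 1` they are compatible only if `s (s + 1) ≤ 2pq`.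

Conversely, if `t (t + 1) ≤ 2pq`, a coloring on `t + p + q + 1` vertices is built greedily:
the columns `j = q + 1, q + 2, …` are processed from left to right, and column `j` receives red
edges from the `j - q` earlier rows used least so far. The rows stay balanced (all but the most
recent ones are used `u` or `u + 1` times), and counting the total number of uses shows that
`u + 1` never exceeds `p`.
-/

open Finset

section OrderedStars

variable {N : ℕ}

def outNbrs (f : Fin N → Fin N → Bool) (c : Bool) (v : Fin N) : Finset (Fin N) :=
  {w | v < w ∧ f v w = c}

def inNbrs (f : Fin N → Fin N → Bool) (c : Bool) (v : Fin N) : Finset (Fin N) :=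
  {u | u < v ∧ f u v = c}

@[simp] lemma mem_outNbrs {f : Fin N → Fin N → Bool} {c : Bool} {v w : Fin N} :
    w ∈ outNbrs f c v ↔ v < w ∧ f v w = c := by simp [outNbrs]

@[simp] lemma mem_inNbrs {f : Fin N → Fin N → Bool} {c : Bool} {u v : Fin N} :
    u ∈ inNbrs f c v ↔ u < v ∧ f u v = c := by simp [inNbrs]

lemma hasOrdCopyB_ordStar_one_iff (f : Fin N → Fin N → Bool) (c : Bool) (r : ℕ) :
    hasOrdCopyB (ordStar 1 (r + 1)) f c ↔ ∃ v, r ≤ #(outNbrs f c v) := by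
  have hr : 1 + (r + 1) - 1 = r + 1 := by omega
  constructor
  · rintro ⟨g, hg, hadj⟩
    let z : Fin (1 + (r + 1) - 1) := ⟨0, by omega⟩
    refine ⟨g z, ?_⟩
    calc r = #((Ioi z).image g) := by
          rw [card_image_of_injective _ hg.injective, Fin.card_Ioi]; simp [z]
      _ ≤ _ := card_le_card fun w hw => by
          obtain ⟨a, ha, rfl⟩ := mem_image.1 hw
          rw [mem_Ioi] at ha
          exact mem_outNbrs.2 ⟨hg ha, hadj z a ha
            (SimpleGraph.fromRel_adj _ _ _ |>.2 ⟨ha.ne, Or.inl rfl⟩)⟩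
  · rintro ⟨v, hv⟩
    obtain ⟨S, hS, hcard⟩ := exists_subset_card_eq hv
    let e := S.orderEmbOfFin hcard
    have he (i) : v < e i ∧ f v (e i) = c := mem_outNbrs.1 (hS (S.orderEmbOfFin_mem hcard i))
    refine ⟨(Fin.cons v e : Fin (r + 1) → Fin N) ∘ Fin.cast hr,
      (Fin.strictMono_cons.2 ⟨fun i => (he i).1, e.strictMono⟩).comp
        (Fin.castOrderIso hr).strictMono,
      fun a b hab hadj => ?_⟩
    rw [ordStar, SimpleGraph.fromRel_adj] at hadj
    have hab' := Fin.lt_def.1 hab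
    have ha : Fin.cast hr a = 0 := Fin.ext (by simp only [Fin.val_cast, Fin.val_zero]; omega)
    obtain ⟨b', hb'⟩ := Fin.exists_succ_eq.2 (show Fin.cast hr b ≠ 0 from fun h => by
      simp only [Fin.ext_iff, Fin.val_cast, Fin.val_zero] at h; omega)
    simpa only [Function.comp_apply, ha, ← hb', Fin.cons_zero, Fin.cons_succ] using (he b').2

lemma hasOrdCopyB_ordStar_one_right_iff (f : Fin N → Fin N → Bool) (c : Bool) (r : ℕ) :
    hasOrdCopyB (ordStar (r + 1) 1) f c ↔ ∃ v, r ≤ #(inNbrs f c v) := by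
  have hr : r + 1 + 1 - 1 = r + 1 := by omega
  constructor
  · rintro ⟨g, hg, hadj⟩
    let z : Fin (r + 1 + 1 - 1) := ⟨r, by omega⟩
    refine ⟨g z, ?_⟩
    calc r = #((Iio z).image g) := by
          rw [card_image_of_injective _ hg.injective, Fin.card_Iio]
      _ ≤ _ := card_le_card fun w hw => by
          obtain ⟨a, ha, rfl⟩ := mem_image.1 hw
          rw [mem_Iio] at ha
          exact mem_inNbrs.2 ⟨hg ha, hadj a z ha
            (SimpleGraph.fromRel_adj _ _ _ |>.2 ⟨ha.ne, Or.inr rfl⟩)⟩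
  · rintro ⟨v, hv⟩
    obtain ⟨S, hS, hcard⟩ := exists_subset_card_eq hv
    let e := S.orderEmbOfFin hcard
    have he (i) : e i < v ∧ f (e i) v = c := mem_inNbrs.1 (hS (S.orderEmbOfFin_mem hcard i))
    refine ⟨(Fin.last r).insertNth v e ∘ Fin.cast hr,
      ((Fin.strictMono_insertNth_iff _ _ _).2 ⟨e.strictMono, fun i _ => (he i).1,
        fun i hi => absurd hi (by simp [Fin.le_def])⟩).comp (Fin.castOrderIso hr).strictMono,
      fun a b hab hadj => ?_⟩
    rw [ordStar, SimpleGraph.fromRel_adj] at hadj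
    have hab' := Fin.lt_def.1 hab
    have hb : Fin.cast hr b = Fin.last r :=
      Fin.ext (by simp only [Fin.val_cast, Fin.val_last]; omega)
    obtain ⟨a', ha'⟩ : ∃ a', (Fin.last r).succAbove a' = Fin.cast hr a :=
      Fin.exists_succAbove_eq fun h => by
        simp only [Fin.ext_iff, Fin.val_cast, Fin.val_last] at h; omega
    simpa only [Function.comp_apply, hb, ← ha', Fin.insertNth_apply_same,
      Fin.insertNth_apply_succAbove] using (he a').2

lemma not_ordRamsey2Prop_ordStar_iff (p q : ℕ) :
    ¬ ordRamsey2Prop (ordStar 1 (p + 2)) (ordStar (q + 2) 1) N ↔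
      ∃ f : Fin N → Fin N → Bool,
        (∀ v, #(outNbrs f true v) ≤ p) ∧ ∀ v, #(inNbrs f false v) ≤ q := by
  have hred (f : Fin N → Fin N → Bool) := hasOrdCopyB_ordStar_one_iff f true (p + 1)
  have hblue (f : Fin N → Fin N → Bool) := hasOrdCopyB_ordStar_one_right_iff f false (q + 1)
  simp only [ordRamsey2Prop, hred, hblue, not_forall, not_or, not_exists, not_le,
    Nat.lt_succ_iff]

lemma ordRamsey2Prop.mono {r s M : ℕ} {G : SimpleGraph (Fin r)} {H : SimpleGraph (Fin s)}
    (hNM : N ≤ M) (h : ordRamsey2Prop G H N) : ordRamsey2Prop G H M := fun f =>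
  (h fun u v => f (Fin.castLE hNM u) (Fin.castLE hNM v)).imp
    (fun ⟨g, hg, hG⟩ => ⟨Fin.castLE hNM ∘ g, (Fin.strictMono_castLE hNM).comp hg, hG⟩)
    (fun ⟨g, hg, hH⟩ => ⟨Fin.castLE hNM ∘ g, (Fin.strictMono_castLE hNM).comp hg, hH⟩)

lemma sum_card_outNbrs_eq_sum_card_inNbrs (f : Fin N → Fin N → Bool) (c : Bool) :
    ∑ v, #(outNbrs f c v) = ∑ v, #(inNbrs f c v) :=
  sum_card_bipartiteAbove_eq_sum_card_bipartiteBelow fun u w => u < w ∧ f u w = c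

lemma card_outNbrs_le (f : Fin N → Fin N → Bool) (c : Bool) (v : Fin N) :
    #(outNbrs f c v) ≤ N - 1 - v :=
  (card_le_card fun _ hw => mem_Ioi.2 (mem_outNbrs.1 hw).1).trans (Fin.card_Ioi v).le

lemma card_inNbrs_add_card_inNbrs_not (f : Fin N → Fin N → Bool) (c : Bool) (v : Fin N) :
    #(inNbrs f c v) + #(inNbrs f (!c) v) = v := by
  have h₁ : inNbrs f c v = {u ∈ Iio v | f u v = c} := by ext; simp
  have h₂ : inNbrs f (!c) v = {u ∈ Iio v | ¬ f u v = c} := by ext; cases c <;> simp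
  rw [h₁, h₂, card_filter_add_card_filter_not, Fin.card_Iio]

end OrderedStars

lemma sum_range_add_tsub (c n : ℕ) : ∑ d ∈ range (c + n), (d - c) = ∑ d ∈ range n, d := by
  rw [sum_range_add, sum_eq_zero fun d hd => Nat.sub_eq_zero_of_le (mem_range.1 hd).le]
  simp

lemma sum_range_add_min (c n : ℕ) :
    ∑ d ∈ range (c + 1 + n), min c d = ∑ d ∈ range (c + 1), d + n * c := by
  rw [sum_range_add]
  congr 1
  · exact sum_congr rfl fun d hd => min_eq_right (Nat.lt_succ_iff.1 (mem_range.1 hd))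
  · rw [sum_congr rfl fun d _ => min_eq_left (by omega : c ≤ c + 1 + d)]
    simp

lemma mul_succ_le_of_degree_le {s p q : ℕ}
    (f : Fin (s + p + q + 1) → Fin (s + p + q + 1) → Bool)
    (hout : ∀ v, #(outNbrs f true v) ≤ p) (hin : ∀ v, #(inNbrs f false v) ≤ q) :
    s * (s + 1) ≤ 2 * p * q := by
  have key :
      ∑ d ∈ range (s + p + q + 1), (d - q) ≤ ∑ d ∈ range (s + p + q + 1), min p d :=
    calc ∑ d ∈ range (s + p + q + 1), (d - q) = ∑ v : Fin (s + p + q + 1), (v - q) :=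
          (Fin.sum_univ_eq_sum_range (· - q) _).symm
      _ ≤ ∑ v, #(inNbrs f true v) := sum_le_sum fun v _ => by
          have := card_inNbrs_add_card_inNbrs_not f true v
          rw [Bool.not_true] at this
          have := hin v
          omega
      _ = ∑ v, #(outNbrs f true v) := (sum_card_outNbrs_eq_sum_card_inNbrs f true).symm
      _ ≤ ∑ v : Fin (s + p + q + 1), min p (s + p + q + 1 - 1 - v) :=
          sum_le_sum fun v _ => le_min (hout v) (card_outNbrs_le f true v)
      _ = ∑ d ∈ range (s + p + q + 1), min p (s + p + q + 1 - 1 - d) :=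
          Fin.sum_univ_eq_sum_range (fun d => min p (s + p + q + 1 - 1 - d)) _
      _ = ∑ d ∈ range (s + p + q + 1), min p d := sum_range_reflect (min p) _
  rw [show s + p + q + 1 = q + (s + p + 1) by omega, sum_range_add_tsub,
    show q + (s + p + 1) = p + 1 + (s + q) by omega, sum_range_add_min] at key
  have h₁ := sum_range_id_mul_two (s + p + 1)
  have h₂ := sum_range_id_mul_two (p + 1)
  simp only [Nat.add_sub_cancel] at h₁ h₂
  nlinarith

/-- `fillState q k = (u, b)` encodes the row usage after the columns `q + 1, …, q + k` have
been filled: row `i` has been used `min (q + k - i) (u + [i < b])` times (see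
`card_filter_mem_fillColumn`). Column `q + k + 1` needs `k + 1` rows. It takes the `u` most
recent rows and then continues round-robin from the pointer `b` through the rows used `u`
times. When this passes the last such row (exactly when `b > q`), it wraps around to row `0`
and starts round `u + 1`. -/
def fillState (q : ℕ) : ℕ → ℕ × ℕ
  | 0 => (0, 0)
  | k + 1 =>
    let s := fillState q k
    if s.2 ≤ q then (s.1, s.2 + (k + 1) - s.1) else (s.1 + 1, s.2 - q)

def fillColumn (q k : ℕ) : Finset ℕ :=
  let s := fillState q k
  if s.2 ≤ q then Ico s.2 (s.2 + (k + 1) - s.1) ∪ Ico (q + k + 1 - s.1) (q + k + 1)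
  else range (s.2 - q) ∪ Ico s.2 (q + k + 1)

def fillColoring (q i j : ℕ) : Bool := decide (q < j ∧ i ∈ fillColumn q (j - q - 1))

section Filling

variable (q : ℕ)

lemma fillState_succ_of_le {k : ℕ} (h : (fillState q k).2 ≤ q) :
    fillState q (k + 1) =
      ((fillState q k).1, (fillState q k).2 + (k + 1) - (fillState q k).1) := by
  simp [fillState, h]

lemma fillState_succ_of_lt {k : ℕ} (h : q < (fillState q k).2) :
    fillState q (k + 1) = ((fillState q k).1 + 1, (fillState q k).2 - q) := by
  simp [fillState, h.not_ge]

lemma fillState_bounds (k : ℕ) :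
    (fillState q k).1 ≤ k ∧ (fillState q k).2 + (fillState q k).1 ≤ q + k := by
  induction k with
  | zero => simp [fillState]
  | succ k ih =>
    by_cases h : (fillState q k).2 ≤ q
    · rw [fillState_succ_of_le q h]; omega
    · rw [fillState_succ_of_lt q (not_le.1 h)]; omega

/-- Both sides are twice the number of uses so far, `2 (1 + 2 + ⋯ + k)`. -/
lemma fillState_total_uses (k : ℕ) :
    let u : ℤ := (fillState q k).1
    let b : ℤ := (fillState q k).2
    2 * (u + 1) * b + 2 * u * (q + k + 1 - u - b) + u * (u - 1) = k * (k + 1) := by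
  induction k with
  | zero => simp [fillState]
  | succ k ih =>
    obtain ⟨hu, hb⟩ := fillState_bounds q k
    by_cases h : (fillState q k).2 ≤ q
    · rw [fillState_succ_of_le q h]
      simp only at ih ⊢
      push_cast [Nat.cast_sub (show (fillState q k).1 ≤ (fillState q k).2 + (k + 1) by omega)]
      linear_combination ih
    · rw [fillState_succ_of_lt q (not_le.1 h)]
      simp only at ih ⊢
      push_cast [Nat.cast_sub (show q ≤ (fillState q k).2 by omega)]
      linear_combination ih

lemma fillState_round_succ_lt {p t k : ℕ} (ht : t * (t + 1) ≤ 2 * p * q) (hk : k + 1 ≤ t + p)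
    (hwrap : q < (fillState q k).2) (hround : (fillState q k).1 < p) :
    (fillState q k).1 + 1 < p := by
  by_contra! hp
  have htot := fillState_total_uses q k
  obtain ⟨-, hb⟩ := fillState_bounds q k
  simp only at htot
  have hp' : (p : ℤ) = (fillState q k).1 + 1 := by omega
  have h₁ : (0 : ℤ) ≤ t + (fillState q k).1 - k := by omega
  have h₂ : (0 : ℤ) ≤ t + k + 1 - (fillState q k).1 := by omega
  have ht' : (t : ℤ) * (t + 1) ≤ 2 * p * q := by exact_mod_cast ht
  have hwrap' : (q : ℤ) + 1 ≤ (fillState q k).2 := by omega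
  nlinarith [mul_nonneg h₁ h₂]

lemma fillState_round_lt {p t : ℕ} (hp : 0 < p) (ht : t * (t + 1) ≤ 2 * p * q) :
    ∀ k ≤ t + p, (fillState q k).1 < p := by
  intro k
  induction k with
  | zero => simpa [fillState] using hp
  | succ k ih =>
    intro hk
    by_cases h : (fillState q k).2 ≤ q
    · rw [fillState_succ_of_le q h]; exact ih (by omega)
    · rw [fillState_succ_of_lt q (not_le.1 h)]
      exact fillState_round_succ_lt q ht hk (not_le.1 h) (ih (by omega))

lemma fillColumn_subset (k : ℕ) : fillColumn q k ⊆ range (q + k + 1) := by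
  intro i hi
  have := fillState_bounds q k
  rw [mem_range]
  dsimp only [fillColumn] at hi
  split_ifs at hi <;> simp only [mem_union, mem_Ico, mem_range] at hi <;> omega

lemma card_fillColumn (k : ℕ) : #(fillColumn q k) = k + 1 := by
  have := fillState_bounds q k
  dsimp only [fillColumn]
  split_ifs with h
  · rw [card_union_of_disjoint (disjoint_left.2 fun i hi hi' => by
      simp only [mem_Ico] at hi hi'; omega), Nat.card_Ico, Nat.card_Ico]
    omega
  · rw [card_union_of_disjoint (disjoint_left.2 fun i hi hi' => by
      simp only [mem_Ico, mem_range] at hi hi'; omega), card_range, Nat.card_Ico]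
    omega

lemma card_filter_mem_fillColumn (k i : ℕ) :
    #{k' ∈ range k | i ∈ fillColumn q k'} =
      min (q + k - i) ((fillState q k).1 + if i < (fillState q k).2 then 1 else 0) := by
  induction k with
  | zero => simp [fillState]
  | succ k ih =>
    have := fillState_bounds q k
    rw [range_add_one, filter_insert, apply_ite card, card_insert_of_notMem (by simp), ih]
    dsimp only [fillColumn]
    by_cases h : (fillState q k).2 ≤ q
    · rw [fillState_succ_of_le q h]
      simp only [h, if_true, mem_union, mem_Ico]
      split_ifs <;> omega
    · rw [fillState_succ_of_lt q (not_le.1 h)]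
      simp only [h, if_false, mem_union, mem_Ico, mem_range]
      split_ifs <;> omega

lemma card_outNbrs_fillColoring_le {p t : ℕ} (ht : t * (t + 1) ≤ 2 * p * q)
    (v : Fin (t + p + q + 1)) : #(outNbrs (fun u w => fillColoring q u w) true v) ≤ p := by
  calc #(outNbrs _ true v) ≤ #{k ∈ range (t + p) | (v : ℕ) ∈ fillColumn q k} := by
        refine card_le_card_of_injOn (fun w => (w : ℕ) - q - 1) (fun w hw => ?_)
          fun w₁ hw₁ w₂ hw₂ h => ?_
        · simp only [mem_coe, mem_outNbrs, fillColoring, decide_eq_true_eq] at hw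
          simp only [mem_coe, mem_filter, mem_range]
          exact ⟨by omega, hw.2.2⟩
        · simp only [mem_coe, mem_outNbrs, fillColoring, decide_eq_true_eq] at hw₁ hw₂ h
          exact Fin.ext (by omega)
    _ = _ := card_filter_mem_fillColumn q _ _
    _ ≤ p := by
      rcases p.eq_zero_or_pos with rfl | hp
      · obtain rfl : t = 0 := by simpa using ht
        simp [fillState]
      · have := fillState_round_lt q hp ht (t + p) le_rfl
        split_ifs <;> omega

lemma card_inNbrs_fillColoring_le {N : ℕ} (v : Fin N) :
    #(inNbrs (fun u w => fillColoring q u w) false v) ≤ q := by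
  have hsum := card_inNbrs_add_card_inNbrs_not (fun u w => fillColoring q u w) true v
  rw [Bool.not_true] at hsum
  by_cases hv : (v : ℕ) ≤ q
  · omega
  obtain ⟨k, hk⟩ : ∃ k, (v : ℕ) = q + k + 1 := ⟨v - q - 1, by omega⟩
  have hcol : fillColumn q k ⊆ (inNbrs (fun u w => fillColoring q u w) true v).image Fin.val :=
    fun i hi => by
      have hiv : i < v := hk ▸ mem_range.1 (fillColumn_subset q k hi)
      refine mem_image.2 ⟨⟨i, hiv.trans v.isLt⟩, ?_, rfl⟩
      simp only [mem_inNbrs, fillColoring, decide_eq_true_eq, Fin.lt_def]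
      exact ⟨hiv, by omega, by rwa [show (v : ℕ) - q - 1 = k by omega]⟩
  have := (card_le_card hcol).trans card_image_le
  rw [card_fillColumn] at this
  omega

end Filling

lemma exists_mul_succ_le_lt (n : ℕ) : ∃ t, t * (t + 1) ≤ n ∧ n < (t + 1) * (t + 2) := by
  have hex : ∃ t, n < (t + 1) * (t + 2) := ⟨n, by nlinarith⟩
  refine ⟨Nat.find hex, ?_, Nat.find_spec hex⟩
  rcases h : Nat.find hex with _ | s
  · simp
  · simpa using Nat.find_min hex (h ▸ Nat.lt_succ_self s : s < Nat.find hex)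

lemma floor_triangular_root {p q t : ℕ} (h₁ : t * (t + 1) ≤ 2 * p * q)
    (h₂ : 2 * p * q < (t + 1) * (t + 2)) :
    ⌊(-1 + √(1 + 8 * (p : ℝ) * q)) / 2⌋ = t := by
  have h₁' : (t : ℝ) * (t + 1) ≤ 2 * p * q := by exact_mod_cast h₁
  have h₂' : (2 * p * q : ℝ) < (t + 1) * (t + 2) := by exact_mod_cast h₂
  have hlo : (2 * t + 1 : ℝ) ≤ √(1 + 8 * (p : ℝ) * q) :=
    Real.le_sqrt_of_sq_le (by nlinarith)
  have hhi : √(1 + 8 * (p : ℝ) * q) < 2 * t + 3 :=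
    (Real.sqrt_lt' (by positivity)).2 (by nlinarith)
  rw [Int.floor_eq_iff, le_div_iff₀ two_pos, div_lt_iff₀ two_pos]
  push_cast
  constructor <;> linarith

/-- for `r₁, r₂ ≥ 2`,
`OR(S_{1,r₁}, S_{r₂,1}) = ⌊(−1 + √(1 + 8(r₁−2)(r₂−2)))/2⌋ + r₁ + r₂ − 2`. -/
theorem ordered_ramsey_opposite_stars (r₁ r₂ : ℕ) (h₁ : 2 ≤ r₁) (h₂ : 2 ≤ r₂) (N₀ : ℕ)
    (hN₀ : (N₀ : ℤ) =
      ⌊(-1 + Real.sqrt (1 + 8 * ((r₁ : ℝ) - 2) * ((r₂ : ℝ) - 2))) / 2⌋ + r₁ + r₂ - 2) :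
    IsLeast {N | ordRamsey2Prop (ordStar 1 r₁) (ordStar r₂ 1) N} N₀ := by
  obtain ⟨p, rfl⟩ : ∃ p, r₁ = p + 2 := ⟨r₁ - 2, by omega⟩
  obtain ⟨q, rfl⟩ : ∃ q, r₂ = q + 2 := ⟨r₂ - 2, by omega⟩
  obtain ⟨t, hlo, hhi⟩ := exists_mul_succ_le_lt (2 * p * q)
  push_cast [add_sub_cancel_right] at hN₀
  rw [floor_triangular_root hlo hhi] at hN₀
  obtain rfl : N₀ = t + 1 + p + q + 1 := by omega
  refine ⟨?_, fun N hN => ?_⟩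
  · by_contra h
    obtain ⟨f, hout, hin⟩ := (not_ordRamsey2Prop_ordStar_iff p q).1 h
    linarith [mul_succ_le_of_degree_le f hout hin]
  · by_contra! hlt
    exact (not_ordRamsey2Prop_ordStar_iff p q).2
      ⟨_, card_outNbrs_fillColoring_le q hlo, card_inNbrs_fillColoring_le q⟩
      (hN.mono (by omega))
end

section
/- There is a constant C = C(c) such that for any positive integers r_1,...,r_c, s_1,...,s_c and the ordered stars S_{r_1,s_1},...,S_{r_c,s_c}, we have OR(S_{r_1,s_1},...,S_{r_c,s_c}) ≤ C · max{r_1,...,r_c, s_1,...,s_c}. -/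
/-!
Suppose a colouring contains no star `S_{r_i,s_i}` in colour `i` and let `M = max_i max(r_i, s_i)`.
Then at every vertex, for every colour `i`, the left or the right colour-`i` degree is below `M`.
Group the vertices by the set `T` of colours whose right degree is below `M`; there are at most
`2^c` groups. Inside a group, charge each pair `u < w` to `u` if its colour lies in `T` and to `w`
otherwise: every vertex is charged at most `cM` times, so a group of `n` vertices satisfies
`n(n-1)/2 ≤ ncM`, i.e. `n ≤ 2cM + 1`. Hence `N ≤ 2^c (2cM + 1) < 2^c (2c + 2) M`.
-/

open Finset

theorem Finset.card_le_two_mul_add_one_of_total {α : Type*} [DecidableEq α] {A : Finset α}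
    {P : α → α → Prop} [DecidableRel P] {D : ℕ}
    (htotal : ∀ v ∈ A, ∀ w ∈ A, v ≠ w → P v w ∨ P w v)
    (hdeg : ∀ v ∈ A, #{w ∈ A | P v w} ≤ D) : #A ≤ 2 * D + 1 := by
  set S := (A ×ˢ A).filter fun p => P p.1 p.2
  have hS : #S ≤ #A * D := by
    rw [card_filter, sum_product]
    simp only [← card_filter]
    simpa using sum_le_card_nsmul A _ D hdeg
  have hoff : A.offDiag ⊆ S ∪ S.image Prod.swap := by
    rintro ⟨v, w⟩ hvw
    obtain ⟨hv, hw, hne⟩ := mem_offDiag.1 hvw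
    rcases htotal v hv w hw hne with h | h
    · exact mem_union_left _ (by simp [S, hv, hw, h])
    · exact mem_union_right _ (mem_image.2 ⟨(w, v), by simp [S, hv, hw, h], rfl⟩)
  have hpairs : #A * (#A - 1) ≤ #A * (2 * D) := calc
    #A * (#A - 1) = #A.offDiag := by rw [offDiag_card, Nat.mul_sub_one]
    _ ≤ #S + #(S.image Prod.swap) := (card_le_card hoff).trans (card_union_le _ _)
    _ ≤ #A * (2 * D) := by linarith [card_image_le (s := S) (f := Prod.swap)]
  rcases (#A).eq_zero_or_pos with h0 | hpos
  · omega
  · have := Nat.le_of_mul_le_mul_left hpairs hpos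
    omega

section Neighbourhoods

variable {N c : ℕ}

def leftNbhd (f : Fin N → Fin N → Fin c) (v : Fin N) (i : Fin c) : Finset (Fin N) :=
  {u | u < v ∧ f u v = i}

def rightNbhd (f : Fin N → Fin N → Fin c) (v : Fin N) (i : Fin c) : Finset (Fin N) :=
  {w | v < w ∧ f v w = i}

theorem hasOrdCopy_ordStar_of_le_card {r s : ℕ} {f : Fin N → Fin N → Fin c} {i : Fin c}
    (v : Fin N) (hleft : r - 1 ≤ #(leftNbhd f v i)) (hright : s - 1 ≤ #(rightNbhd f v i)) :
    hasOrdCopy (ordStar r s) f i := by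
  set gL := (leftNbhd f v i).orderEmbOfCardLe hleft
  set gR := (rightNbhd f v i).orderEmbOfCardLe hright
  have hL (j) : gL j < v ∧ f (gL j) v = i :=
    (mem_filter.1 (orderEmbOfCardLe_mem _ hleft j)).2
  have hR (j) : v < gR j ∧ f v (gR j) = i :=
    (mem_filter.1 (orderEmbOfCardLe_mem _ hright j)).2
  let g : Fin (r + s - 1) → Fin N := fun a =>
    if hlt : a.val < r - 1 then gL ⟨a, hlt⟩
    else if heq : a.val = r - 1 then v
    else gR ⟨a - r, by have := a.isLt; omega⟩
  refine ⟨g, fun a b hab => ?_, fun a b hab hadj => ?_⟩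
  · rw [Fin.lt_def] at hab
    simp only [g]
    split_ifs
    · exact gL.lt_iff_lt.2 (Fin.mk_lt_mk.2 hab)
    · exact (hL _).1
    · exact (hL _).1.trans (hR _).1
    all_goals first
      | omega
      | exact (hR _).1
      | exact gR.lt_iff_lt.2 (Fin.mk_lt_mk.2 (by omega))
  · rw [Fin.lt_def] at hab
    rw [ordStar, SimpleGraph.fromRel_adj] at hadj
    rcases hadj.2 with ha | hb
    · simpa [g, ha, show ¬ b.val < r - 1 by omega, show b.val ≠ r - 1 by omega] using (hR _).2
    · simpa [g, hb, show a.val < r - 1 by omega] using (hL _).2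

theorem card_le_of_rightNbhd_le_of_leftNbhd_le (f : Fin N → Fin N → Fin c) (M : ℕ)
    (T : Finset (Fin c)) (A : Finset (Fin N))
    (hright : ∀ v ∈ A, ∀ i ∈ T, #(rightNbhd f v i) ≤ M)
    (hleft : ∀ v ∈ A, ∀ i ∉ T, #(leftNbhd f v i) ≤ M) : #A ≤ 2 * (c * M) + 1 := by
  classical
  let P (v w : Fin N) : Prop := (v < w ∧ f v w ∈ T) ∨ (w < v ∧ f w v ∉ T)
  refine card_le_two_mul_add_one_of_total (P := P) (fun v _ w _ hne => ?_) (fun v hv => ?_)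
  · rcases hne.lt_or_gt with h | h <;> by_cases hT : f v w ∈ T <;> by_cases hT' : f w v ∈ T <;>
      simp [P, h, hT, hT']
  · let nbhd (i : Fin c) := if i ∈ T then rightNbhd f v i else leftNbhd f v i
    calc #{w ∈ A | P v w} ≤ #(univ.biUnion nbhd) := card_le_card fun w hw => by
          rcases (mem_filter.1 hw).2 with h | h
          · exact mem_biUnion.2 ⟨f v w, mem_univ _, by simp [nbhd, h, rightNbhd]⟩
          · exact mem_biUnion.2 ⟨f w v, mem_univ _, by simp [nbhd, h, leftNbhd]⟩
      _ ≤ ∑ i, #(nbhd i) := card_biUnion_le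
      _ ≤ ∑ _i : Fin c, M := sum_le_sum fun i _ => by
          by_cases hi : i ∈ T <;> simp [nbhd, hi, hright v hv, hleft v hv]
      _ = c * M := by simp

theorem le_of_forall_leftNbhd_lt_or_rightNbhd_lt (f : Fin N → Fin N → Fin c) (M : ℕ)
    (hsmall : ∀ v i, #(leftNbhd f v i) < M ∨ #(rightNbhd f v i) < M) :
    N ≤ 2 ^ c * (2 * (c * M) + 1) := by
  classical
  let lowRight (v : Fin N) : Finset (Fin c) := {i | #(rightNbhd f v i) < M}
  calc N = #(univ : Finset (Fin N)) := (card_fin N).symm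
    _ ≤ (2 * (c * M) + 1) * #(univ : Finset (Finset (Fin c))) :=
        card_le_mul_card_image_of_maps_to (f := lowRight) (fun _ _ => mem_univ _) _ fun T _ =>
          card_le_of_rightNbhd_le_of_leftNbhd_le f M T _
            (fun v hv i hi => by
              rw [← (mem_filter.1 hv).2] at hi
              exact (mem_filter.1 hi).2.le)
            (fun v hv i hi => by
              rw [← (mem_filter.1 hv).2] at hi
              exact ((hsmall v i).resolve_right (by simpa [lowRight] using hi)).le)
    _ = 2 ^ c * (2 * (c * M) + 1) := by simp [mul_comm]

end Neighbourhoods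

/-- there is a constant `C = C(c)` such that for all ordered stars
`S_{r_1,s_1},…,S_{r_c,s_c}` we have
`OR(S_{r_1,s_1},…,S_{r_c,s_c}) ≤ C · max{r_1,…,r_c,s_1,…,s_c}`. -/
theorem ordered_ramsey_stars_linear (c : ℕ) (hc : 0 < c) :
    ∃ C : ℕ, ∀ (r s : Fin c → ℕ), (∀ i, 0 < r i) → (∀ i, 0 < s i) →
      ∀ N : ℕ, C * (Finset.univ.sup fun i => max (r i) (s i)) ≤ N →
        ordRamseyProp (fun i => r i + s i - 1) (fun i => ordStar (r i) (s i)) N := by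
  refine ⟨2 ^ c * (2 * c + 2), fun r s hr _ N hN f => ?_⟩
  by_contra! hfree
  set M := univ.sup fun i => max (r i) (s i)
  have hle (i : Fin c) : r i ≤ M ∧ s i ≤ M :=
    max_le_iff.1 (le_sup (f := fun i => max (r i) (s i)) (mem_univ i))
  have hM : 1 ≤ M := (hr ⟨0, hc⟩).trans_le (hle _).1
  have hsmall (v : Fin N) (i : Fin c) : #(leftNbhd f v i) < M ∨ #(rightNbhd f v i) < M := by
    by_contra! hbig
    have := hle i
    exact hfree i (hasOrdCopy_ordStar_of_le_card v (by omega) (by omega))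
  have hNle := le_of_forall_leftNbhd_lt_or_rightNbhd_lt f M hsmall
  have hgap : 2 ^ c * (2 * (c * M) + 1) < 2 ^ c * (2 * c + 2) * M := by
    rw [mul_assoc]
    exact Nat.mul_lt_mul_of_pos_left (by nlinarith) (by positivity)
  omega
end

section
/- For every positive integer n > 2, the ordered Ramsey number of the alternating path satisfies OR((P_n, alt); 2) ≥ 2n − 2. -/
/-- Position (0-indexed) of the `j`-th vertex (1-indexed) of the path `P_n` in
the alternating ordering: odd-indexed vertices first in increasing order of
index, then even-indexed vertices in decreasing order of index. -/
def altPos (n j : ℕ) : ℕ := if j % 2 = 1 then (j - 1) / 2 else n - j / 2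

/-- The alternating path `(P_n, alt)`: the path `v_1 v_2 … v_n` with vertices
ordered as `v_1 < v_3 < v_5 < … < … < v_4 < v_2`. -/
def altPath (n : ℕ) : SimpleGraph (Fin n) :=
  SimpleGraph.fromRel (fun a b =>
    ∃ j : ℕ, 1 ≤ j ∧ j < n ∧ a.val = altPos n j ∧ b.val = altPos n (j + 1))

def parityColoring (N : ℕ) (x y : Fin N) : Bool := decide ((x.val + y.val) % 2 = 0)

lemma parityColoring_comm {N : ℕ} (x y : Fin N) : parityColoring N x y = parityColoring N y x := by
  simp only [parityColoring, Nat.add_comm]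

section MonochromaticCopy

variable {r N : ℕ} {G : SimpleGraph (Fin r)} {g : Fin r → Fin N} {col : Bool}

lemma parityColoring_eq_of_adj
    (hcol : ∀ a b : Fin r, a < b → G.Adj a b → parityColoring N (g a) (g b) = col)
    {a b : Fin r} (hab : G.Adj a b) : parityColoring N (g a) (g b) = col := by
  rcases lt_or_gt_of_ne hab.ne with h | h
  · exact hcol a b h hab
  · rw [parityColoring_comm]
    exact hcol b a h hab.symm

lemma val_mod_two_eq_of_adj_of_adj
    (hcol : ∀ a b : Fin r, a < b → G.Adj a b → parityColoring N (g a) (g b) = col)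
    {a b c : Fin r} (hab : G.Adj a b) (hbc : G.Adj b c) : (g a).val % 2 = (g c).val % 2 := by
  have h := (parityColoring_eq_of_adj hcol hab).trans (parityColoring_eq_of_adj hcol hbc).symm
  simp only [parityColoring, decide_eq_decide] at h
  omega

end MonochromaticCopy

lemma altPath_adj_iff {n : ℕ} {a b : Fin n} :
    (altPath n).Adj a b ↔ a ≠ b ∧ (a.val + b.val + 1 = n ∨ a.val + b.val = n) := by
  simp only [altPath, SimpleGraph.fromRel_adj, altPos, ne_eq, and_congr_right_iff]
  intro hne
  replace hne : a.val ≠ b.val := Fin.val_ne_of_ne hne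
  constructor
  · rintro (⟨j, -, hj, ha, hb⟩ | ⟨j, -, hj, hb, ha⟩) <;> split_ifs at ha hb <;> omega
  · rintro (h | h) <;> rcases lt_or_gt_of_ne hne with hlt | hlt
    · left; refine ⟨2 * a.val + 1, by omega, by omega, ?_, ?_⟩ <;> split_ifs <;> omega
    · right; refine ⟨2 * b.val + 1, by omega, by omega, ?_, ?_⟩ <;> split_ifs <;> omega
    · right; refine ⟨2 * a.val, by omega, by omega, ?_, ?_⟩ <;> split_ifs <;> omega
    · left; refine ⟨2 * b.val, by omega, by omega, ?_, ?_⟩ <;> split_ifs <;> omega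

lemma val_mod_two_eq_succ_of_altPath_copy {n N : ℕ} {g : Fin n → Fin N} {col : Bool}
    (hcol : ∀ a b : Fin n, a < b → (altPath n).Adj a b → parityColoring N (g a) (g b) = col)
    (m : ℕ) (hm : m + 1 < n) (hmid : m ≠ (n - 1) / 2) :
    (g ⟨m, by omega⟩).val % 2 = (g ⟨m + 1, hm⟩).val % 2 :=
  val_mod_two_eq_of_adj_of_adj hcol (b := ⟨n - 1 - m, by omega⟩)
    (altPath_adj_iff.2 ⟨Fin.ne_of_val_ne (by simp only; omega), by simp only; omega⟩)
    (altPath_adj_iff.2 ⟨Fin.ne_of_val_ne (by simp only; omega), by simp only; omega⟩)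

lemma two_mul_le_add_of_mod_two_eq_succ {n : ℕ} {f : Fin n → ℕ} (hf : StrictMono f) (t : ℕ)
    (hpar : ∀ m (hm : m + 1 < n), m ≠ t → f ⟨m, by omega⟩ % 2 = f ⟨m + 1, hm⟩ % 2)
    (m : ℕ) (hm : m < n) : 2 * m ≤ f ⟨m, hm⟩ + if t < m then 1 else 0 := by
  induction m with
  | zero => simp
  | succ m ih =>
    have hlt : f ⟨m, by omega⟩ < f ⟨m + 1, hm⟩ := hf (Fin.mk_lt_mk.2 m.lt_succ_self)
    have ih := ih (by omega)
    rcases eq_or_ne m t with rfl | hmt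
    · split_ifs at ih ⊢ <;> omega
    · have := hpar m hm hmt
      split_ifs at ih ⊢ <;> omega

theorem alternating_path_lower_bound_general (n : ℕ) :
    ∀ N : ℕ, ordRamsey2Prop (altPath n) (altPath n) N → 2 * n - 2 ≤ N := by
  intro N hN
  obtain _ | n := n
  · omega
  obtain ⟨col, g, hg, hcol⟩ : ∃ col, hasOrdCopyB (altPath (n + 1)) (parityColoring N) col :=
    (hN _).elim (⟨true, ·⟩) (⟨false, ·⟩)
  have hlast := two_mul_le_add_of_mod_two_eq_succ (f := fun i => (g i).val)
    (fun _ _ h => hg h) _ (val_mod_two_eq_succ_of_altPath_copy hcol) n n.lt_succ_self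
  have hlast_lt := (g ⟨n, n.lt_succ_self⟩).isLt
  split_ifs at hlast <;> omega

/-- for `n > 2`, the ordered Ramsey number of the alternating path
satisfies `OR((P_n, alt); 2) ≥ 2n − 2`. -/
theorem alternating_path_lower_bound (n : ℕ) (hn : 2 < n) :
    ∀ N : ℕ, ordRamsey2Prop (altPath n) (altPath n) N → 2 * n - 2 ≤ N :=
  alternating_path_lower_bound_general n
end

section
/- For every positive integer n > 2, the ordered Ramsey number of the alternating path satisfies OR((P_n, alt); 2) ≤ (4n − 3 + sqrt(8n² − 8n − 7))/2; in particular OR((P_n, alt); 2) = O(n). -/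
/-!
Read in path order, an ordered copy of `(P_n, alt)` is a monochromatic zigzag: a path each of whose
vertices lies strictly between the previous two. So if neither colour contains one, label each edge
by its colour and the number `k ∈ [2, n)` of vertices of the longest zigzag of that colour ending
with it. Two edges with the same label whose longest zigzags end at the same vertex coincide:
otherwise one penultimate vertex lies between the other and the last vertex, and extending by it
beats the label. That last vertex has `k - 1` zigzag vertices around it, so each label is carried
by at most `N + 1 - k` edges and `N.choose 2 ≤ 2 ∑_{k=2}^{n-1} (N + 1 - k)`, a quadratic
inequality in `N` that fails beyond the stated bound.
-/

open Finset

section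

variable {N n : ℕ} {f : Fin N → Fin N → Bool}

/-- Equivalently: `z 0 < z 1` and each further vertex lies strictly between the previous two. -/
def IsZigzag (z : ℕ → Fin N) (k : ℕ) : Prop :=
  ∀ ⦃t s⦄, t < s → s < k → (t % 2 = 0 → z t < z s) ∧ (t % 2 = 1 → z s < z t)

namespace IsZigzag

variable {z : ℕ → Fin N} {k : ℕ}

lemma of_le (hz : IsZigzag z k) {m : ℕ} (hm : m ≤ k) : IsZigzag z m :=
  fun _ _ hts hs => hz hts (by omega)

lemma lt_of_even_of_odd (hz : IsZigzag z k) {t s : ℕ} (ht : t % 2 = 0) (hs : s % 2 = 1)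
    (htk : t < k) (hsk : s < k) : z t < z s := by
  rcases Nat.lt_or_gt_of_ne (show t ≠ s by omega) with h | h
  · exact (hz h hsk).1 ht
  · exact (hz h htk).2 hs

lemma le_of_even (hz : IsZigzag z k) {t s : ℕ} (ht : t % 2 = 0) (hts : t ≤ s) (hs : s < k) :
    z t ≤ z s := by
  rcases hts.lt_or_eq with h | rfl
  · exact ((hz h hs).1 ht).le
  · exact le_rfl

lemma le_of_odd (hz : IsZigzag z k) {t s : ℕ} (ht : t % 2 = 1) (hts : t ≤ s) (hs : s < k) :
    z s ≤ z t := by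
  rcases hts.lt_or_eq with h | rfl
  · exact ((hz h hs).2 ht).le
  · exact le_rfl

lemma le_val_and_val_add_lt (hz : IsZigzag z k) {s : ℕ} (hs : s < k) :
    (s + 1) / 2 ≤ (z s).val ∧ (z s).val + s / 2 < N := by
  induction s using Nat.strong_induction_on with
  | _ s ih =>
    match s, hs, ih with
    | 0, _, _ => exact ⟨Nat.zero_le _, (z 0).isLt⟩
    | 1, h1, _ =>
      have := Fin.lt_def.1 ((hz zero_lt_one h1).1 rfl)
      omega
    | s + 2, hs, ih =>
      have h1 := ih (s + 1) (by omega) (by omega)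
      have h0 := ih s (by omega) (by omega)
      have hsucc := hz (show s + 1 < s + 2 by omega) hs
      have hskip := hz (show s < s + 2 by omega) hs
      rcases Nat.mod_two_eq_zero_or_one s with he | ho
      · have := Fin.lt_def.1 (hskip.1 he)
        have := Fin.lt_def.1 (hsucc.2 (by omega))
        omega
      · have := Fin.lt_def.1 (hskip.2 ho)
        have := Fin.lt_def.1 (hsucc.1 (by omega))
        omega

lemma update (hz : IsZigzag z k) (hk : 2 ≤ k) {w : Fin N}
    (hw : w ∈ Set.uIoo (z (k - 2)) (z (k - 1))) : IsZigzag (Function.update z k w) (k + 1) := by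
  intro t s hts hs
  rw [Function.update_of_ne (by omega : t ≠ k)]
  rcases (Nat.lt_succ_iff.1 hs).lt_or_eq with hs | hsk
  · rw [Function.update_of_ne hs.ne]
    exact hz hts hs
  subst s
  rw [Function.update_self]
  have hlast := hz (show k - 2 < k - 1 by omega) (by omega)
  rcases Nat.mod_two_eq_zero_or_one k with he | ho
  · rw [Set.uIoo_of_lt (hlast.1 (by omega))] at hw
    exact ⟨fun ht => (hz.le_of_even ht (by omega : t ≤ k - 2) (by omega)).trans_lt hw.1,
      fun ht => hw.2.trans_le (hz.le_of_odd ht (by omega : t ≤ k - 1) (by omega))⟩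
  · rw [Set.uIoo_of_gt (hlast.2 (by omega))] at hw
    exact ⟨fun ht => (hz.le_of_even ht (by omega : t ≤ k - 1) (by omega)).trans_lt hw.1,
      fun ht => hw.2.trans_le (hz.le_of_odd ht (by omega : t ≤ k - 2) (by omega))⟩

lemma penultimate_mem_uIoo {z' : ℕ → Fin N} (hz : IsZigzag z k) (hz' : IsZigzag z' k)
    (hk : 2 ≤ k) (hlast : z (k - 1) = z' (k - 1)) (hne : z (k - 2) ≠ z' (k - 2)) :
    z' (k - 2) ∈ Set.uIoo (z (k - 2)) (z (k - 1)) ∨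
      z (k - 2) ∈ Set.uIoo (z' (k - 2)) (z' (k - 1)) := by
  have h := hz (show k - 2 < k - 1 by omega) (by omega)
  have h' := hz' (show k - 2 < k - 1 by omega) (by omega)
  rw [← hlast] at h' ⊢
  rcases Nat.mod_two_eq_zero_or_one (k - 2) with he | ho
  · rcases hne.lt_or_gt with hlt | hlt
    · exact Or.inl (Set.mem_uIoo_of_lt hlt (h'.1 he))
    · exact Or.inr (Set.mem_uIoo_of_lt hlt (h.1 he))
  · rcases hne.lt_or_gt with hlt | hlt
    · exact Or.inr (Set.mem_uIoo_of_gt (h.2 ho) hlt)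
    · exact Or.inl (Set.mem_uIoo_of_gt (h'.2 ho) hlt)

end IsZigzag

/-- The colouring `f` is only ever read with the smaller vertex first. -/
def edgeColor (f : Fin N → Fin N → Bool) (e : Sym2 (Fin N)) : Bool := f e.inf e.sup

lemma edgeColor_mk_of_lt (f : Fin N → Fin N → Bool) {a b : Fin N} (h : a < b) :
    edgeColor f s(a, b) = f a b := by
  simp [edgeColor, inf_eq_left.2 h.le, sup_eq_right.2 h.le]

def IsMonoZigzag (f : Fin N → Fin N → Bool) (c : Bool) (z : ℕ → Fin N) (k : ℕ) : Prop :=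
  IsZigzag z k ∧ ∀ t, t + 1 < k → edgeColor f s(z t, z (t + 1)) = c

namespace IsMonoZigzag

variable {c : Bool} {z : ℕ → Fin N} {k : ℕ}

lemma of_le (hz : IsMonoZigzag f c z k) {m : ℕ} (hm : m ≤ k) : IsMonoZigzag f c z m :=
  ⟨hz.1.of_le hm, fun t ht => hz.2 t (by omega)⟩

lemma update (hz : IsMonoZigzag f c z k) (hk : 2 ≤ k) {w : Fin N}
    (hw : w ∈ Set.uIoo (z (k - 2)) (z (k - 1))) (hc : edgeColor f s(z (k - 1), w) = c) :
    IsMonoZigzag f c (Function.update z k w) (k + 1) := by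
  refine ⟨hz.1.update hk hw, fun t ht => ?_⟩
  rw [Function.update_of_ne (by omega : t ≠ k)]
  rcases (Nat.lt_succ_iff.1 ht).lt_or_eq with ht | htk
  · rw [Function.update_of_ne (by omega : t + 1 ≠ k)]
    exact hz.2 t ht
  · rw [htk, Function.update_self, show t = k - 1 by omega]
    exact hc

end IsMonoZigzag

/-- Position `i` of `(P_n, alt)` holds the path vertex `v_(altIndex n i + 1)`: this inverts
`altPos`, shifted to 0-indexed path order. -/
def altIndex (n i : ℕ) : ℕ := if i < (n + 1) / 2 then 2 * i else 2 * (n - i) - 1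

lemma altIndex_altPos {j : ℕ} (hj : 1 ≤ j) (hjn : j ≤ n) :
    altIndex n (altPos n j) = j - 1 := by
  unfold altIndex altPos
  split_ifs <;> omega

lemma IsZigzag.strictMono_altIndex {z : ℕ → Fin N} (hz : IsZigzag z n) :
    StrictMono fun i : Fin n => z (altIndex n i) := by
  intro i j hij
  have hi := i.isLt
  have hj := j.isLt
  have hij : i.val < j.val := hij
  simp only [altIndex]
  split_ifs
  · exact (hz (by omega) (by omega)).1 (by omega)
  · exact hz.lt_of_even_of_odd (by omega) (by omega) (by omega) (by omega)
  · omega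
  · exact (hz (by omega) (by omega)).2 (by omega)

lemma IsMonoZigzag.hasOrdCopyB_altPath {c : Bool} {z : ℕ → Fin N} (hz : IsMonoZigzag f c z n) :
    hasOrdCopyB (altPath n) f c := by
  have hmono := hz.1.strictMono_altIndex
  refine ⟨fun i => z (altIndex n i), hmono, fun a b hab hadj => ?_⟩
  have hlt := hmono hab
  suffices ∃ j, j + 1 < n ∧ s(z (altIndex n a), z (altIndex n b)) = s(z j, z (j + 1)) by
    obtain ⟨j, hj, he⟩ := this
    rw [← edgeColor_mk_of_lt f hlt, he]
    exact hz.2 j hj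
  obtain ⟨-, ⟨j, hj, hjn, ha, hb⟩ | ⟨j, hj, hjn, hb, ha⟩⟩ :=
    (SimpleGraph.fromRel_adj _ _ _).1 hadj
  · refine ⟨j - 1, by omega, ?_⟩
    rw [ha, hb, altIndex_altPos hj hjn.le, altIndex_altPos (by omega) hjn,
      show j + 1 - 1 = j - 1 + 1 by omega]
  · refine ⟨j - 1, by omega, ?_⟩
    rw [ha, hb, altIndex_altPos hj hjn.le, altIndex_altPos (by omega) hjn,
      show j + 1 - 1 = j - 1 + 1 by omega, Sym2.eq_swap]

def zigzagLengths (f : Fin N → Fin N → Bool) (e : Sym2 (Fin N)) : Set ℕ :=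
  {k | 2 ≤ k ∧ ∃ z, IsMonoZigzag f (edgeColor f e) z k ∧ s(z (k - 2), z (k - 1)) = e}

noncomputable def longestZigzag (f : Fin N → Fin N → Bool) (e : Sym2 (Fin N)) : ℕ :=
  sSup (zigzagLengths f e)

lemma two_mem_zigzagLengths {e : Sym2 (Fin N)} (he : ¬e.IsDiag) : 2 ∈ zigzagLengths f e := by
  induction e using Sym2.inductionOn with
  | hf a b =>
    wlog hab : a < b generalizing a b
    · rw [Sym2.eq_swap]
      exact this b a (by rwa [Sym2.eq_swap]) ((Ne.symm (Sym2.mk_isDiag_iff.not.1 he)).lt_of_le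
        (not_lt.1 hab))
    refine ⟨le_rfl, fun t => if t = 0 then a else b, ⟨?_, fun t ht => ?_⟩, rfl⟩
    · intro t s hts hs
      obtain rfl : t = 0 := by omega
      obtain rfl : s = 1 := by omega
      simpa using hab
    · obtain rfl : t = 0 := by omega
      rfl

lemma bddAbove_zigzagLengths (hlen : ∀ c z k, IsMonoZigzag f c z k → k < n)
    (e : Sym2 (Fin N)) : BddAbove (zigzagLengths f e) :=
  ⟨n, fun _ ⟨_, z, hz, _⟩ => (hlen _ z _ hz).le⟩

lemma longestZigzag_mem {e : Sym2 (Fin N)} (hbdd : BddAbove (zigzagLengths f e))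
    (he : ¬e.IsDiag) : longestZigzag f e ∈ zigzagLengths f e :=
  Nat.sSup_mem ⟨2, two_mem_zigzagLengths he⟩ hbdd

lemma longestZigzag_lt_of_update {e : Sym2 (Fin N)} (hbdd : BddAbove (zigzagLengths f e))
    {z : ℕ → Fin N} {k : ℕ} (hz : IsMonoZigzag f (edgeColor f e) z k) (hk : 2 ≤ k)
    {w : Fin N} (hw : w ∈ Set.uIoo (z (k - 2)) (z (k - 1))) (he : s(z (k - 1), w) = e) :
    k < longestZigzag f e := by
  refine Nat.lt_of_succ_le (le_csSup hbdd
    ⟨by omega, _, hz.update hk hw (by rw [he]), ?_⟩)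
  rw [show k + 1 - 2 = k - 1 by omega, show k + 1 - 1 = k by omega, Function.update_self,
    Function.update_of_ne (by omega)]
  exact he

lemma IsMonoZigzag.penultimate_notMem_uIoo (hlen : ∀ c z k, IsMonoZigzag f c z k → k < n)
    {c : Bool} {k : ℕ} {z z' : ℕ → Fin N} (hk : 2 ≤ k) (hz : IsMonoZigzag f c z k)
    (hz' : IsMonoZigzag f c z' k) (hmax' : longestZigzag f s(z' (k - 2), z' (k - 1)) ≤ k)
    (hlast : z (k - 1) = z' (k - 1)) : z' (k - 2) ∉ Set.uIoo (z (k - 2)) (z (k - 1)) := by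
  intro hw
  have hc : edgeColor f s(z' (k - 2), z' (k - 1)) = c := by
    simpa only [show k - 2 + 1 = k - 1 by omega] using hz'.2 (k - 2) (by omega)
  have := longestZigzag_lt_of_update (bddAbove_zigzagLengths hlen _) (hc ▸ hz) hk hw
    (by rw [hlast, Sym2.eq_swap])
  omega

lemma IsMonoZigzag.penultimate_eq (hlen : ∀ c z k, IsMonoZigzag f c z k → k < n)
    {c : Bool} {k : ℕ} {z z' : ℕ → Fin N} (hk : 2 ≤ k) (hz : IsMonoZigzag f c z k)
    (hz' : IsMonoZigzag f c z' k) (hmax : longestZigzag f s(z (k - 2), z (k - 1)) ≤ k)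
    (hmax' : longestZigzag f s(z' (k - 2), z' (k - 1)) ≤ k) (hlast : z (k - 1) = z' (k - 1)) :
    z (k - 2) = z' (k - 2) := by
  by_contra hne
  rcases hz.1.penultimate_mem_uIoo hz'.1 hk hlast hne with hw | hw
  · exact hz.penultimate_notMem_uIoo hlen hk hz' hmax' hlast hw
  · exact hz'.penultimate_notMem_uIoo hlen hk hz hmax hlast.symm hw

lemma card_filter_longestZigzag_le (hlen : ∀ c z k, IsMonoZigzag f c z k → k < n) (c : Bool)
    (k : ℕ) :
    #{e ∈ (⊤ : SimpleGraph (Fin N)).edgeFinset | edgeColor f e = c ∧ longestZigzag f e = k}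
      ≤ N + 1 - k := by
  set F := {e ∈ (⊤ : SimpleGraph (Fin N)).edgeFinset |
    edgeColor f e = c ∧ longestZigzag f e = k}
  have hreal : ∀ e ∈ F,
      2 ≤ k ∧ ∃ z, IsMonoZigzag f c z k ∧ s(z (k - 2), z (k - 1)) = e := by
    intro e he
    obtain ⟨hedge, hc, hL⟩ := mem_filter.1 he
    rw [← hc, ← hL]
    exact longestZigzag_mem (bddAbove_zigzagLengths hlen e) (by simpa using hedge)
  rcases F.eq_empty_or_nonempty with hF | ⟨e₀, he₀⟩
  · simp [hF]
  have hk := (hreal e₀ he₀).1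
  have : Nonempty (Fin N) := ⟨e₀.inf⟩
  choose! z hz hzF using fun e he => (hreal e he).2
  have hmax : ∀ e ∈ F, longestZigzag f s(z e (k - 2), z e (k - 1)) ≤ k := fun e he => by
    rw [hzF e he, (mem_filter.1 he).2.2]
  calc #F ≤ #(Icc (k / 2) (N - 1 - (k - 1) / 2)) := by
        refine card_le_card_of_injOn (fun e => (z e (k - 1)).val) (fun e he => ?_) ?_
        · have := (hz e he).1.le_val_and_val_add_lt (show k - 1 < k by omega)
          simp only [coe_Icc, Set.mem_Icc]
          omega
        · intro e he e' he' hlast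
          replace hlast := Fin.ext hlast
          rw [← hzF e he, ← hzF e' he', hlast,
            (hz e he).penultimate_eq hlen hk (hz e' he') (hmax e he) (hmax e' he') hlast]
    _ ≤ N + 1 - k := by
        rw [Nat.card_Icc]
        omega

theorem choose_two_le_of_isMonoZigzag_lt (hlen : ∀ c z k, IsMonoZigzag f c z k → k < n) :
    N.choose 2 ≤ 2 * ∑ k ∈ Ico 2 n, (N + 1 - k) := by
  have hmaps : ∀ e ∈ (⊤ : SimpleGraph (Fin N)).edgeFinset,
      (edgeColor f e, longestZigzag f e) ∈ (univ : Finset Bool) ×ˢ Ico 2 n := by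
    intro e he
    obtain ⟨h2, z, hz, -⟩ :=
      longestZigzag_mem (bddAbove_zigzagLengths hlen e) (by simpa using he)
    exact mem_product.2 ⟨mem_univ _, mem_Ico.2 ⟨h2, hlen _ z _ hz⟩⟩
  calc N.choose 2 = #(⊤ : SimpleGraph (Fin N)).edgeFinset := by
        rw [SimpleGraph.card_edgeFinset_top_eq_card_choose_two, Fintype.card_fin]
    _ = ∑ ck ∈ (univ : Finset Bool) ×ˢ Ico 2 n,
          #{e ∈ (⊤ : SimpleGraph (Fin N)).edgeFinset |
            (edgeColor f e, longestZigzag f e) = ck} :=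
        card_eq_sum_card_fiberwise hmaps
    _ ≤ ∑ ck ∈ (univ : Finset Bool) ×ˢ Ico 2 n, (N + 1 - ck.2) := by
        refine sum_le_sum fun ck _ => ?_
        simpa only [Prod.ext_iff] using card_filter_longestZigzag_le hlen ck.1 ck.2
    _ = 2 * ∑ k ∈ Ico 2 n, (N + 1 - k) := by
        rw [sum_product, Fintype.sum_bool, two_mul]

lemma cast_sum_Ico_two_sub (hn : 2 ≤ n) (hnN : n ≤ N + 1) :
    ((∑ k ∈ Ico 2 n, (N + 1 - k) : ℕ) : ℝ) = (n - 2) * N - (n - 1) * (n - 2) / 2 := by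
  induction n, hn using Nat.le_induction with
  | base => simp
  | succ n hn ih =>
    rw [sum_Ico_succ_top hn, Nat.cast_add, ih (by omega), Nat.cast_sub (by omega)]
    push_cast
    ring

lemma two_mul_sub_lt_mul_sub_div_two_of_sqrt_le {x y : ℝ} (hy : 2 ≤ y)
    (hx : (4 * y - 3 + Real.sqrt (8 * y ^ 2 - 8 * y - 7)) / 2 ≤ x) :
    2 * ((y - 2) * x - (y - 1) * (y - 2) / 2) < x * (x - 1) / 2 := by
  set s := Real.sqrt (8 * y ^ 2 - 8 * y - 7)
  have hs : s ^ 2 = 8 * y ^ 2 - 8 * y - 7 := Real.sq_sqrt (by nlinarith)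
  have hs0 : 0 ≤ s := Real.sqrt_nonneg _
  have hsq : s ^ 2 ≤ (2 * x - 4 * y + 3) ^ 2 := pow_le_pow_left₀ hs0 (by linarith) 2
  -- `hsq` says `x ^ 2 - (4y - 3) x + 2y ^ 2 - 4y + 4 ≥ 0`; twice the goal adds `4x - 2y > 0` to it.
  nlinarith

end

/-- for `n > 2`, the ordered Ramsey number of the alternating path
satisfies `OR((P_n, alt); 2) ≤ (4n − 3 + √(8n² − 8n − 7))/2`. -/
theorem alternating_path_upper_bound (n : ℕ) (hn : 2 < n) :
    ∀ N : ℕ, (4 * (n : ℝ) - 3 + Real.sqrt (8 * (n : ℝ) ^ 2 - 8 * n - 7)) / 2 ≤ N →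
      ordRamsey2Prop (altPath n) (altPath n) N := by
  intro N hN f
  by_contra hcopy
  have hlen : ∀ c z k, IsMonoZigzag f c z k → k < n := by
    intro c z k hz
    by_contra hk
    have := (hz.of_le (not_lt.1 hk)).hasOrdCopyB_altPath
    cases c <;> tauto
  have hn2 : (2 : ℝ) ≤ n := by exact_mod_cast hn.le
  have hnN : n ≤ N + 1 := by
    have : (n : ℝ) ≤ N + 1 := by linarith [Real.sqrt_nonneg (8 * (n : ℝ) ^ 2 - 8 * n - 7)]
    exact_mod_cast this
  have hcount : (N.choose 2 : ℝ) ≤ 2 * ((∑ k ∈ Ico 2 n, (N + 1 - k) : ℕ) : ℝ) := by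
    exact_mod_cast choose_two_le_of_isMonoZigzag_lt hlen
  rw [Nat.cast_choose_two, cast_sum_Ico_two_sub hn.le hnN] at hcount
  exact (two_mul_sub_lt_mul_sub_div_two_of_sqrt_le hn2 hN).not_ge hcount
end

section
/- For integers r, s ≥ 2, the ordered Ramsey number of monotone cycles satisfies the upper bound OR((C_r, mon), (C_s, mon)) ≤ 2rs − 3r − 3s + 6. -/
/-- The monotone cycle `(C_n, mon)` on vertices `v_0 < v_1 < … < v_{n-1}`:
the monotone path edges together with the edge `{v_0, v_{n-1}}`. -/
def monCycle (n : ℕ) : SimpleGraph (Fin n) :=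
  SimpleGraph.fromRel (fun a b => a.val + 1 = b.val ∨ (a.val = 0 ∧ b.val = n - 1))

/-!
The first vertex `v₀` has more than `(r-2)(s-1)` red or more than `(r-1)(s-2)` blue neighbours
above it. In the red case let `ℓ v` be the number of edges of a longest red monotone path ending
at `v` inside this neighbourhood. Since `ℓ` strictly increases along red edges, either some
`ℓ v ≥ r - 2`, and the red path on `r - 1` vertices closes through `v₀` into a red monotone `C_r`,
or by pigeonhole one of the `r - 2` level sets of `ℓ` has `s` vertices and spans a blue clique,
which contains a blue monotone `C_s`. The blue case is symmetric.
-/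

open Finset SimpleGraph

section MonotonePath

variable {α : Type*} [Preorder α] (f : α → α → Bool) (c : Bool)

def HasMonoPathTo (k : ℕ) (v : α) : Prop :=
  ∃ g : Fin (k + 1) → α, StrictMono g ∧ (∀ i : Fin k, f (g i.castSucc) (g i.succ) = c) ∧
    g (Fin.last k) = v

theorem hasMonoPathTo_zero (v : α) : HasMonoPathTo f c 0 v :=
  ⟨fun _ => v, Fin.strictMono_iff_lt_succ.2 fun i => i.elim0, fun i => i.elim0, rfl⟩

variable {f c} in
theorem HasMonoPathTo.snoc {k : ℕ} {u v : α} (h : HasMonoPathTo f c k u) (huv : u < v)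
    (hc : f u v = c) : HasMonoPathTo f c (k + 1) v := by
  obtain ⟨g, hg, hgc, rfl⟩ := h
  refine ⟨Fin.snoc g v, Fin.strictMono_iff_lt_succ.2 fun i => ?_, fun i => ?_, Fin.snoc_last _ _⟩
  · cases i using Fin.lastCases with
    | last => simpa [Fin.succ_last] using huv
    | cast i =>
      rw [Fin.succ_castSucc, Fin.snoc_castSucc, Fin.snoc_castSucc]
      exact hg Fin.castSucc_lt_succ
  · cases i using Fin.lastCases with
    | last => simpa [Fin.succ_last] using hc
    | cast i =>
      rw [Fin.succ_castSucc, Fin.snoc_castSucc, Fin.snoc_castSucc]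
      exact hgc i

end MonotonePath

section OrderedCopies

variable {N : ℕ} (f : Fin N → Fin N → Bool)

variable {f} in
theorem HasMonoPathTo.hasOrdCopyB_pathGraph {c : Bool} {k : ℕ} {v : Fin N}
    (h : HasMonoPathTo f c k v) : hasOrdCopyB (pathGraph (k + 1)) f c := by
  obtain ⟨g, hg, hgc, -⟩ := h
  refine ⟨g, hg, fun a b hab hadj => ?_⟩
  have hb : b.val = a.val + 1 := by
    rw [pathGraph_adj] at hadj
    have : a.val < b.val := hab
    omega
  have ha : a.val < k := by omega
  obtain rfl : b = Fin.succ ⟨a, ha⟩ := Fin.ext hb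
  exact hgc ⟨a, ha⟩

theorem hasOrdCopyB_of_comp {M s : ℕ} {G : SimpleGraph (Fin s)} {e : Fin M → Fin N}
    (he : StrictMono e) {col : Bool} (h : hasOrdCopyB G (fun x y => f (e x) (e y)) col) :
    hasOrdCopyB G f col := by
  obtain ⟨g, hg, hgc⟩ := h
  exact ⟨e ∘ g, he.comp hg, hgc⟩

theorem hasOrdCopyB_of_monochromatic {s : ℕ} (G : SimpleGraph (Fin s)) {col : Bool}
    (T : Finset (Fin N)) (hT : s ≤ #T) (hcol : ∀ x ∈ T, ∀ y ∈ T, x < y → f x y = col) :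
    hasOrdCopyB G f col := by
  refine ⟨T.orderEmbOfFin rfl ∘ Fin.castLE hT,
    (T.orderEmbOfFin rfl).strictMono.comp (Fin.strictMono_castLE hT), fun a b hab _ => ?_⟩
  exact hcol _ (T.orderEmbOfFin_mem rfl _) _ (T.orderEmbOfFin_mem rfl _)
    ((T.orderEmbOfFin rfl).strictMono (Fin.strictMono_castLE hT hab))

theorem hasOrdCopyB_pathGraph_or (c : Bool) {n s : ℕ} (H : SimpleGraph (Fin s))
    (hN : n * (s - 1) < N) :
    hasOrdCopyB (pathGraph (n + 1)) f c ∨ hasOrdCopyB H f (!c) := by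
  classical
  -- Capping the path length at `n` loses nothing: `ℓ v = n` already gives the path.
  set ℓ : Fin N → ℕ := fun v => Nat.findGreatest (fun k => HasMonoPathTo f c k v) n
  have hℓ (v : Fin N) : HasMonoPathTo f c (ℓ v) v :=
    Nat.findGreatest_spec (P := fun k => HasMonoPathTo f c k v) (Nat.zero_le n)
      (hasMonoPathTo_zero f c v)
  by_cases hlong : ∃ v, ℓ v = n
  · obtain ⟨v, hv⟩ := hlong
    exact .inl (hv ▸ (hℓ v).hasOrdCopyB_pathGraph)
  rw [not_exists] at hlong
  have hlt (v : Fin N) : ℓ v < n := (Nat.findGreatest_le n).lt_of_ne (hlong v)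
  have hinc {u v : Fin N} (huv : u < v) (hc : f u v = c) : ℓ u < ℓ v :=
    Nat.le_findGreatest (hlt u) ((hℓ u).snoc huv hc)
  obtain ⟨y, -, hy⟩ := exists_lt_card_fiber_of_mul_lt_card_of_maps_to (s := univ)
    (t := range n) (f := ℓ) (fun v _ => mem_range.2 (hlt v)) (by simpa using hN)
  refine .inr (hasOrdCopyB_of_monochromatic f H {x | ℓ x = y} (by omega) fun u hu v hv huv => ?_)
  simp only [mem_filter, mem_univ, true_and] at hu hv
  by_contra hne
  have := hinc huv (by simpa using hne)
  omega

theorem hasOrdCopyB_monCycle_of_pathGraph {M n : ℕ} {c : Bool} {v₀ : Fin N} {e : Fin M → Fin N}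
    (he : StrictMono e) (hv₀ : ∀ i, v₀ < e i ∧ f v₀ (e i) = c)
    (h : hasOrdCopyB (pathGraph (n + 1)) (fun x y => f (e x) (e y)) c) :
    hasOrdCopyB (monCycle (n + 2)) f c := by
  obtain ⟨g, hg, hpath⟩ := h
  refine ⟨Fin.cons v₀ (e ∘ g), Fin.strictMono_cons.2 ⟨fun i => (hv₀ (g i)).1, he.comp hg⟩,
    fun a b hab hadj => ?_⟩
  cases b using Fin.cases with
  | zero => exact absurd hab (Fin.not_lt_zero a)
  | succ b =>
    cases a using Fin.cases with
    | zero => simpa using (hv₀ (g b)).2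
    | succ a =>
      have hab' : a < b := Fin.succ_lt_succ_iff.1 hab
      have hadj' : (pathGraph (n + 1)).Adj a b := by
        rw [monCycle, fromRel_adj] at hadj
        rw [pathGraph_adj]
        simp only [Fin.val_succ] at hadj
        omega
      simpa using hpath a b hab' hadj'

theorem hasOrdCopyB_monCycle_or_of_lt_card {n s : ℕ} {c : Bool} (H : SimpleGraph (Fin s))
    (v₀ : Fin N) (S : Finset (Fin N)) (hS : ∀ x ∈ S, v₀ < x ∧ f v₀ x = c)
    (hcard : n * (s - 1) < #S) :
    hasOrdCopyB (monCycle (n + 2)) f c ∨ hasOrdCopyB H f (!c) := by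
  let e := S.orderEmbOfFin rfl
  have hv₀ (i : Fin #S) : v₀ < e i ∧ f v₀ (e i) = c := hS _ (S.orderEmbOfFin_mem rfl i)
  exact (hasOrdCopyB_pathGraph_or _ c H hcard).imp
    (hasOrdCopyB_monCycle_of_pathGraph f e.strictMono hv₀) (hasOrdCopyB_of_comp f e.strictMono)

end OrderedCopies

/-- for `r, s ≥ 2`,
`OR((C_r, mon), (C_s, mon)) ≤ 2rs − 3r − 3s + 6`. -/
theorem ordered_ramsey_monotone_cycles_upper (r s : ℕ) (hr : 2 ≤ r) (hs : 2 ≤ s) :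
    ∀ N : ℕ, 2 * r * s + 6 - 3 * r - 3 * s ≤ N →
      ordRamsey2Prop (monCycle r) (monCycle s) N := by
  intro N hN f
  obtain ⟨a, rfl⟩ : ∃ a, r = a + 2 := ⟨r - 2, by omega⟩
  obtain ⟨b, rfl⟩ : ∃ b, s = b + 2 := ⟨s - 2, by omega⟩
  have hN' : a * (b + 1) + b * (a + 1) + 2 ≤ N := by
    have h1 : 2 * (a + 2) * (b + 2) = 2 * (a * b) + 4 * a + 4 * b + 8 := by ring
    have h2 : a * (b + 1) + b * (a + 1) = 2 * (a * b) + a + b := by ring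
    omega
  let v₀ : Fin N := ⟨0, by omega⟩
  let R := (Ioi v₀).filter (fun x => f v₀ x = true)
  let B := (Ioi v₀).filter (fun x => ¬f v₀ x = true)
  have hRB : #R + #B = N - 1 := by
    rw [card_filter_add_card_filter_not, Fin.card_Ioi]
    rfl
  have hR : ∀ x ∈ R, v₀ < x ∧ f v₀ x = true := by simp [R]
  have hB : ∀ x ∈ B, v₀ < x ∧ f v₀ x = false := by simp [B]
  rcases (by omega : a * (b + 1) < #R ∨ b * (a + 1) < #B) with hred | hblue
  · exact hasOrdCopyB_monCycle_or_of_lt_card f (monCycle (b + 2)) v₀ R hR hred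
  · exact (hasOrdCopyB_monCycle_or_of_lt_card f (monCycle (a + 2)) v₀ B hB hblue).symm
end

section
/- Let k be a positive integer, let G be a k-degenerate ordered graph with n vertices, and let N ≥ n². Then every red/blue coloring of the edges of the ordered complete graph on N vertices contains either a blue ordered copy of G or a red copy of K_{t,t} with t = (N/n²)^{1/(k+1)}, where the red K_{t,t} has one color class of t vertices entirely to the left of the other class of t vertices, with all t² edges between them red. -/
/-!
Cut `Fin N` into `n` consecutive blocks of length `L = n t ^ (k + 1)` and look for a blue copy
of `G` with vertex `i` in block `i`; the copy is then automatically ordered. Embed the vertices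
greedily in the degeneracy order, keeping for every unembedded vertex `w` the set of points of its
block that are blue to all images of embedded neighbours of `w`; with `d` neighbours embedded it
has at least `L / t ^ d` points. A new vertex `v` has at most `k` embedded neighbours, so at least
`n t` candidates. For each other vertex `w`, fewer than `t` of them can be blue to fewer than a
`1 / t` fraction of the candidates of `w`: otherwise `t` such points and `t` points red to all of
them form a red `K_{t,t}` between two blocks. So some candidate for `v` keeps the invariant.
-/

/-- An ordered graph on `Fin n` is `k`-degenerate if there is an ordering of the
vertices (possibly different from the vertex ordering) in which every vertex has
at most `k` earlier neighbors. -/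
def IsKDegenerate (k n : ℕ) (G : SimpleGraph (Fin n)) : Prop :=
  ∃ π : Fin n ≃ Fin n, ∀ v : Fin n, {u | G.Adj u v ∧ π u < π v}.ncard ≤ k

open Finset Function

section Biclique

variable {α β : Type*}

def HasBiclique (r : α → β → Prop) (t : ℕ) (A : Finset α) (B : Finset β) : Prop :=
  ∃ A' ⊆ A, ∃ B' ⊆ B, #A' = t ∧ #B' = t ∧ ∀ a ∈ A', ∀ b ∈ B', r a b

theorem HasBiclique.mono {r : α → β → Prop} {t : ℕ} {A₁ A₂ : Finset α} {B₁ B₂ : Finset β}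
    (hA : A₁ ⊆ A₂) (hB : B₁ ⊆ B₂) (h : HasBiclique r t A₁ B₁) : HasBiclique r t A₂ B₂ :=
  let ⟨A', hA', B', hB', hA'card, hB'card, hr⟩ := h
  ⟨A', hA'.trans hA, B', hB'.trans hB, hA'card, hB'card, hr⟩

/-- Any `t` vertices of `A` are together related to at most `t (#B / t - 1) ≤ #B - t` vertices
of `B`. -/
theorem hasBiclique_not_of_forall_card_filter_lt [DecidableEq β] (r : α → β → Prop)
    [∀ a, DecidablePred (r a)] {t : ℕ} {A : Finset α} {B : Finset β} (hA : t ≤ #A)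
    (hsparse : ∀ a ∈ A, #{b ∈ B | r a b} < #B / t) :
    HasBiclique (fun a b => ¬ r a b) t A B := by
  obtain ⟨A', hA'A, rfl⟩ := exists_subset_card_eq hA
  set B' := {b ∈ B | ∀ a ∈ A', ¬ r a b}
  suffices #A' ≤ #B' by
    obtain ⟨B'', hB''B', hB''card⟩ := exists_subset_card_eq this
    exact ⟨A', hA'A, B'', hB''B'.trans (filter_subset _ _), rfl, hB''card,
      fun a ha b hb => (mem_filter.1 (hB''B' hb)).2 a ha⟩
  obtain rfl | ⟨a₀, ha₀⟩ := A'.eq_empty_or_nonempty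
  · simp
  have hq : 1 ≤ #B / #A' := (Nat.zero_le _).trans_lt (hsparse a₀ (hA'A ha₀))
  have hcover : B \ B' ⊆ A'.biUnion fun a => {b ∈ B | r a b} := by
    intro b hb
    simp only [B', mem_sdiff, mem_filter, not_and, not_forall, not_not] at hb
    obtain ⟨a, ha, hab⟩ := hb.2 hb.1
    exact mem_biUnion.2 ⟨a, ha, mem_filter.2 ⟨hb.1, hab⟩⟩
  have hrelated : #(B \ B') ≤ #A' * (#B / #A' - 1) :=
    (card_le_card hcover).trans <| card_biUnion_le_card_mul _ _ _ fun a ha =>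
      Nat.le_sub_one_of_lt (hsparse a (hA'A ha))
  have hsplit : #(B \ B') + #B' = #B := card_sdiff_add_card_eq_card (filter_subset _ _)
  have hdiv : #A' * (#B / #A') ≤ #B := Nat.mul_div_le _ _
  rw [Nat.mul_sub_one] at hrelated
  have := Nat.le_mul_of_pos_right #A' hq
  omega

end Biclique

namespace SimpleGraph

variable {V α : Type*} (G : SimpleGraph V) (H : SimpleGraph α) [DecidableRel G.Adj]
  [DecidableRel H.Adj] (P : V → Finset α)

def candidates (S : Finset V) (g : V → α) (w : V) : Finset α :=
  {y ∈ P w | ∀ u ∈ S, G.Adj u w → H.Adj (g u) y}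

def IsGreedyState (m t : ℕ) (S : Finset V) (g : V → α) : Prop :=
  (∀ v ∈ S, g v ∈ G.candidates H P S g v) ∧
    ∀ w ∉ S, m / t ^ #{u ∈ S | G.Adj u w} ≤ #(G.candidates H P S g w)

variable {G H P}

theorem mem_candidates {S : Finset V} {g : V → α} {w : V} {y : α} :
    y ∈ G.candidates H P S g w ↔ y ∈ P w ∧ ∀ u ∈ S, G.Adj u w → H.Adj (g u) y :=
  mem_filter

theorem candidates_subset (S : Finset V) (g : V → α) (w : V) : G.candidates H P S g w ⊆ P w :=
  filter_subset _ _

theorem candidates_insert_update [DecidableEq V] {S : Finset V} {g : V → α} {v : V}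
    (hv : v ∉ S) (x : α) (w : V) :
    G.candidates H P (insert v S) (update g v x) w =
      {y ∈ G.candidates H P S g w | G.Adj v w → H.Adj x y} := by
  ext y
  have hg : ∀ u ∈ S, update g v x u = g u := fun u hu =>
    update_of_ne (ne_of_mem_of_not_mem hu hv) _ _
  simp +contextual only [candidates, mem_filter, mem_insert, forall_eq_or_imp, update_self, hg]
  tauto

theorem IsGreedyState.insert [DecidableEq V] {m t : ℕ} {S : Finset V} {g : V → α}
    (h : G.IsGreedyState H P m t S g) {v : V} (hv : v ∉ S) {x : α}
    (hx : x ∈ G.candidates H P S g v)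
    (hgood : ∀ w ≠ v, #(G.candidates H P S g w) / t ≤
      #{y ∈ G.candidates H P S g w | H.Adj x y}) :
    G.IsGreedyState H P m t (insert v S) (update g v x) := by
  refine ⟨fun u hu => ?_, fun w hw => ?_⟩
  · rw [candidates_insert_update hv, mem_filter]
    obtain rfl | hu := mem_insert.1 hu
    · simpa using hx
    · rw [update_of_ne (ne_of_mem_of_not_mem hu hv)]
      exact ⟨h.1 u hu, fun hadj => ((mem_candidates.1 hx).2 u hu hadj.symm).symm⟩
  · obtain ⟨hwv, hwS⟩ : w ≠ v ∧ w ∉ S := by simpa [not_or] using hw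
    rw [candidates_insert_update hv, filter_insert]
    by_cases hvw : G.Adj v w
    · rw [if_pos hvw, card_insert_of_notMem (by simp [hv]), pow_succ,
        ← Nat.div_div_eq_div_mul]
      simp only [hvw, true_implies]
      exact (Nat.div_le_div_right (h.2 w hwS)).trans (hgood w hwv)
    · simpa [hvw] using h.2 w hwS

theorem IsGreedyState.exists_good_candidate [Fintype V] [DecidableEq V] [DecidableEq α]
    {m t k : ℕ} {S : Finset V} {g : V → α} (h : G.IsGreedyState H P m t S g) {v : V}
    (hv : v ∉ S) (hdeg : #{u ∈ S | G.Adj u v} ≤ k) (ht : 0 < t)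
    (hm : Fintype.card V * t ≤ m / t ^ k)
    (hred : ∀ w ≠ v, ¬ HasBiclique (fun a b => ¬ H.Adj a b) t (P v) (P w)) :
    ∃ x ∈ G.candidates H P S g v, ∀ w ≠ v, #(G.candidates H P S g w) / t ≤
      #{y ∈ G.candidates H P S g w | H.Adj x y} := by
  set C := G.candidates H P S g
  set bad : V → Finset α := fun w => {x ∈ C v | #{y ∈ C w | H.Adj x y} < #(C w) / t}
  have hbad : ∀ w ≠ v, #(bad w) < t := fun w hwv => by
    by_contra! hbig
    exact hred w hwv <| (hasBiclique_not_of_forall_card_filter_lt H.Adj hbig fun x hx =>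
      (mem_filter.1 hx).2).mono ((filter_subset _ _).trans (candidates_subset S g v))
        (candidates_subset S g w)
  have hcard : #((univ.erase v).biUnion bad) < #(C v) := calc
    _ ≤ #(univ.erase v) * (t - 1) := card_biUnion_le_card_mul _ _ _ fun w hw =>
      Nat.le_sub_one_of_lt (hbad w (ne_of_mem_erase hw))
    _ < Fintype.card V * t := by
      rw [card_erase_of_mem (mem_univ v), card_univ]
      have : 0 < Fintype.card V := Fintype.card_pos_iff.2 ⟨v⟩
      exact Nat.mul_lt_mul'' (Nat.sub_lt this one_pos) (Nat.sub_lt ht one_pos)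
    _ ≤ m / t ^ k := hm
    _ ≤ m / t ^ #{u ∈ S | G.Adj u v} :=
      Nat.div_le_div_left (Nat.pow_le_pow_right ht hdeg) (by positivity)
    _ ≤ #(C v) := h.2 v hv
  obtain ⟨x, hxC, hxbad⟩ := exists_mem_notMem_of_card_lt_card hcard
  refine ⟨x, hxC, fun w hwv => ?_⟩
  by_contra! hlt
  exact hxbad (mem_biUnion.2 ⟨w, mem_erase.2 ⟨hwv, mem_univ w⟩, mem_filter.2 ⟨hxC, hlt⟩⟩)

theorem exists_hom_forall_mem_or_hasBiclique [Fintype V] [DecidableEq V] [DecidableEq α]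
    {β : Type*} [LinearOrder β] (π : V → β) (hπ : Injective π) {k t : ℕ} (ht : 0 < t)
    (hdeg : ∀ v, {u | G.Adj u v ∧ π u < π v}.ncard ≤ k)
    (hP : ∀ v, Fintype.card V * t ^ (k + 1) ≤ #(P v)) :
    (∃ g : G →g H, ∀ v, g v ∈ P v) ∨
      ∃ v w, v ≠ w ∧ HasBiclique (fun a b => ¬ H.Adj a b) t (P v) (P w) := by
  rw [or_iff_not_imp_right]
  intro hred
  push Not at hred
  have hm : Fintype.card V * t ≤ Fintype.card V * t ^ (k + 1) / t ^ k := by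
    rw [Nat.le_div_iff_mul_le (by positivity)]
    exact le_of_eq (by ring)
  have hne : ∀ v, (P v).Nonempty := fun v => card_pos.1 <|
    (Nat.mul_pos (Fintype.card_pos_iff.2 ⟨v⟩) (pow_pos ht _)).trans_le (hP v)
  obtain ⟨g, hg⟩ : ∃ g, G.IsGreedyState H P (Fintype.card V * t ^ (k + 1)) t univ g := by
    induction (univ : Finset V) using induction_on_max_value π with
    | empty =>
      exact ⟨fun v => (hne v).choose, by simp, fun w _ => by simp [candidates, hP w]⟩
    | insert v S hv hmax ih =>
      obtain ⟨g, hg⟩ := ih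
      have hdegS : #{u ∈ S | G.Adj u v} ≤ k := by
        rw [← Set.ncard_coe_finset]
        refine (Set.ncard_le_ncard (fun u hu => ?_) (Set.toFinite _)).trans (hdeg v)
        obtain ⟨huS, huv⟩ := mem_filter.1 hu
        exact ⟨huv, (hmax u huS).lt_of_ne (hπ.ne (ne_of_mem_of_not_mem huS hv))⟩
      obtain ⟨x, hx, hgood⟩ :=
        hg.exists_good_candidate hv hdegS ht hm fun w hwv => hred v w hwv.symm
      exact ⟨_, hg.insert hv hx hgood⟩
  exact ⟨⟨g, fun {u v} huv => (mem_candidates.1 (hg.1 v (mem_univ v))).2 u (mem_univ u) huv⟩,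
    fun v => candidates_subset _ _ _ (hg.1 v (mem_univ v))⟩

end SimpleGraph

section OrderedColoring

variable {α : Type*} [LinearOrder α]

/-- The colour of a pair `x < y` is `f x y`; the values of `f` elsewhere are ignored. -/
def blueGraph (f : α → α → Bool) : SimpleGraph α :=
  SimpleGraph.fromRel fun x y => x < y ∧ f x y = true

theorem blueGraph_adj_of_lt {f : α → α → Bool} {x y : α} (hxy : x < y) :
    (blueGraph f).Adj x y ↔ f x y = true := by
  simp [blueGraph, hxy, hxy.ne, hxy.not_gt]

theorem exists_strictMono_of_forall_lt {f : α → α → Bool} {t : ℕ} {A B : Finset α}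
    (hA : #A = t) (hB : #B = t) (h : ∀ a ∈ A, ∀ b ∈ B, a < b ∧ f a b = false) :
    ∃ g₁ g₂ : Fin t → α, StrictMono g₁ ∧ StrictMono g₂ ∧ (∀ a b, g₁ a < g₂ b) ∧
      ∀ a b, f (g₁ a) (g₂ b) = false :=
  have hmem a b := h _ (A.orderEmbOfFin_mem hA a) _ (B.orderEmbOfFin_mem hB b)
  ⟨A.orderEmbOfFin hA, B.orderEmbOfFin hB, (A.orderEmbOfFin hA).strictMono,
    (B.orderEmbOfFin hB).strictMono, fun a b => (hmem a b).1, fun a b => (hmem a b).2⟩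

theorem exists_strictMono_of_hasBiclique {f : α → α → Bool} {t : ℕ} {A B : Finset α}
    (hsep : (∀ a ∈ A, ∀ b ∈ B, a < b) ∨ ∀ a ∈ A, ∀ b ∈ B, b < a)
    (h : HasBiclique (fun a b => ¬ (blueGraph f).Adj a b) t A B) :
    ∃ g₁ g₂ : Fin t → α, StrictMono g₁ ∧ StrictMono g₂ ∧ (∀ a b, g₁ a < g₂ b) ∧
      ∀ a b, f (g₁ a) (g₂ b) = false := by
  obtain ⟨A', hA', B', hB', hA'card, hB'card, hred⟩ := h
  obtain hlt | hgt := hsep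
  · refine exists_strictMono_of_forall_lt hA'card hB'card fun a ha b hb => ?_
    have hab := hlt a (hA' ha) b (hB' hb)
    simpa [blueGraph_adj_of_lt hab, hab] using hred a ha b hb
  · refine exists_strictMono_of_forall_lt hB'card hA'card fun b hb a ha => ?_
    have hba := hgt a (hA' ha) b (hB' hb)
    simpa [(blueGraph f).adj_comm, blueGraph_adj_of_lt hba, hba] using hred a ha b hb

end OrderedColoring

section Blocks

variable {n N L : ℕ}

def finBlock (hL : n * L ≤ N) (i : Fin n) : Finset (Fin N) :=
  univ.image fun j : Fin L => Fin.castLE hL (finProdFinEquiv (i, j))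

theorem card_finBlock (hL : n * L ≤ N) (i : Fin n) : #(finBlock hL i) = L := by
  rw [finBlock, card_image_of_injective _ fun j j' hjj' => ?_, card_fin]
  simpa using finProdFinEquiv.injective (Fin.castLE_injective hL hjj')

theorem val_div_eq_of_mem_finBlock {hL : n * L ≤ N} {i : Fin n} {y : Fin N}
    (hy : y ∈ finBlock hL i) :
    y.val / L = i := by
  obtain ⟨j, -, rfl⟩ := mem_image.1 hy
  have hL0 : 0 < L := j.pos
  simp [Nat.add_mul_div_left _ _ hL0, Nat.div_eq_of_lt j.isLt]

theorem lt_of_mem_finBlock_of_lt {hL : n * L ≤ N} {i i' : Fin n} (hii' : i < i')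
    {y y' : Fin N} (hy : y ∈ finBlock hL i) (hy' : y' ∈ finBlock hL i') : y < y' :=
  Nat.lt_of_div_lt_div (c := L) <| by
    rw [val_div_eq_of_mem_finBlock hy, val_div_eq_of_mem_finBlock hy']; exact hii'

end Blocks

theorem floor_rpow_one_div_pow_le {x : ℝ} (hx : 0 ≤ x) (k : ℕ) :
    (⌊x ^ ((1 : ℝ) / ((k : ℝ) + 1))⌋₊ : ℝ) ^ (k + 1) ≤ x := calc
  _ ≤ (x ^ ((1 : ℝ) / ((k : ℝ) + 1))) ^ (k + 1) :=
    pow_le_pow_left₀ (Nat.cast_nonneg _) (Nat.floor_le (by positivity)) _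
  _ = x := by
    rw [show (1 : ℝ) / ((k : ℝ) + 1) = ((k + 1 : ℕ) : ℝ)⁻¹ by push_cast; rw [one_div],
      Real.rpow_inv_natCast_pow hx k.succ_ne_zero]

theorem sq_mul_pow_floor_rpow_le (k n N : ℕ) :
    n ^ 2 * ⌊((N : ℝ) / (n : ℝ) ^ 2) ^ ((1 : ℝ) / ((k : ℝ) + 1))⌋₊ ^ (k + 1) ≤ N := by
  obtain rfl | hn := Nat.eq_zero_or_pos n
  · simp
  have h := floor_rpow_one_div_pow_le (x := (N : ℝ) / (n : ℝ) ^ 2) (by positivity) k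
  rw [le_div_iff₀ (by positivity)] at h
  exact_mod_cast (mul_comm _ _).trans_le h

theorem degenerate_blue_copy_or_red_biclique_general (k n N : ℕ)
    (G : SimpleGraph (Fin n)) (hdeg : IsKDegenerate k n G)
    (f : Fin N → Fin N → Bool) :
    (∃ g : Fin n → Fin N, StrictMono g ∧
        ∀ a b : Fin n, a < b → G.Adj a b → f (g a) (g b) = true) ∨
    (∃ g₁ g₂ : Fin ⌊((N : ℝ) / (n : ℝ) ^ 2) ^ ((1 : ℝ) / ((k : ℝ) + 1))⌋₊ → Fin N,
        StrictMono g₁ ∧ StrictMono g₂ ∧ (∀ a b, g₁ a < g₂ b) ∧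
        ∀ a b, f (g₁ a) (g₂ b) = false) := by
  classical
  obtain ⟨π, hπ⟩ := hdeg
  set t := ⌊((N : ℝ) / (n : ℝ) ^ 2) ^ ((1 : ℝ) / ((k : ℝ) + 1))⌋₊
  obtain ht | ht := Nat.eq_zero_or_pos t
  · rw [ht]
    exact Or.inr ⟨Fin.elim0, Fin.elim0, fun a => a.elim0, fun a => a.elim0, fun a => a.elim0,
      fun a => a.elim0⟩
  have hL : n * (n * t ^ (k + 1)) ≤ N := by
    rw [← mul_assoc, ← sq]; exact sq_mul_pow_floor_rpow_le k n N
  obtain ⟨g, hg⟩ | ⟨v, w, hvw, hred⟩ :=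
    SimpleGraph.exists_hom_forall_mem_or_hasBiclique (G := G) (H := blueGraph f)
      (P := finBlock hL) π π.injective ht hπ fun v => by simp [card_finBlock]
  · have hmono : StrictMono g := fun a b hab => lt_of_mem_finBlock_of_lt hab (hg a) (hg b)
    exact Or.inl ⟨g, hmono, fun a b hab hadj =>
      (blueGraph_adj_of_lt (hmono hab)).1 (g.map_rel hadj)⟩
  · refine Or.inr (exists_strictMono_of_hasBiclique ?_ hred)
    exact hvw.lt_or_gt.imp (fun h a ha b hb => lt_of_mem_finBlock_of_lt h ha hb)
      fun h a ha b hb => lt_of_mem_finBlock_of_lt h hb ha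

/-- let `G` be a `k`-degenerate ordered graph on `n` vertices and
`N ≥ n²`. Every red/blue (`false`/`true`) coloring of the ordered complete graph
on `N` vertices contains a blue ordered copy of `G`, or a red copy of `K_{t,t}`
with `t = (N/n²)^{1/(k+1)}` whose first class lies entirely to the left of the
second. -/
theorem degenerate_blue_copy_or_red_biclique (k n N : ℕ) (hk : 0 < k)
    (G : SimpleGraph (Fin n)) (hdeg : IsKDegenerate k n G) (hN : n ^ 2 ≤ N)
    (f : Fin N → Fin N → Bool) :
    (∃ g : Fin n → Fin N, StrictMono g ∧
        ∀ a b : Fin n, a < b → G.Adj a b → f (g a) (g b) = true) ∨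
    (∃ g₁ g₂ : Fin ⌊((N : ℝ) / (n : ℝ) ^ 2) ^ ((1 : ℝ) / ((k : ℝ) + 1))⌋₊ → Fin N,
        StrictMono g₁ ∧ StrictMono g₂ ∧ (∀ a b, g₁ a < g₂ b) ∧
        ∀ a b, f (g₁ a) (g₂ b) = false) :=
  degenerate_blue_copy_or_red_biclique_general k n N G hdeg f
end
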